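/- arXiv:2502.09358 — 8 statements merged into one kernel-verified Lean document; each statement's English description precedes it below -/
import Mathlib

section
/- Let d_1 ≥ d_2 ≥ ... ≥ d_n be a non-increasing sequence of natural numbers. There exists a simple graph G on labeled vertices v_1, ..., v_n with deg_G(v_i) = d_i for every i if and only if (1) the sum d_1 + ... + d_n is even, and (2) for every k with 1 ≤ k ≤ n, the inequality Σ_{i=1}^k d_i ≤ k(k-1) + Σ_{i=k+1}^n min(d_i, k) holds. -/
/-!
Necessity: the degree sum is twice the number of edges, and among the first `k` vertices there
are at most `k(k-1)` edge ends inside, while every other vertex `w` sends at most `min (deg w) k`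
edges into them.

Sufficiency follows Choudum (1986), by induction on the degree sum. Let `m` be the last positive
term and `t` the last index before `m` with `d t = d 0`. Lowering `d t` and `d m` by one keeps the
sequence non-increasing and keeps the inequalities: the only values of `k` at which the right-hand
side drops more than the left are those with `k ≤ t`, where the inequality for `d` is strict
(by the inequality at `t + 1`, resp. by parity). A graph realizing the lowered sequence becomes one
realizing `d` by adding the edge `t m`, after trading an edge `u v` for `t u` and `m v` if `t m`
is already present.
-/

open Finset

namespace Finset

lemma sum_ite_eq_or {ι M : Type*} [DecidableEq ι] [AddCommMonoid M] (s : Finset ι) {a b : ι}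
    (hab : a ≠ b) (f : ι → M) :
    ∑ j ∈ s, (if j = a ∨ j = b then f j else 0) =
      (if a ∈ s then f a else 0) + (if b ∈ s then f b else 0) := by
  rw [← sum_ite_eq' s a f, ← sum_ite_eq' s b f, ← sum_add_distrib]
  refine sum_congr rfl fun j _ => ?_
  by_cases hja : j = a
  · simp [hja, hab]
  · by_cases hjb : j = b <;> simp [hja, hjb, hab.symm]

lemma sum_Ico_min_le (e : ℕ → ℕ) (k : ℕ) {a c n : ℕ} (hac : a ≤ c) (hcn : c ≤ n) :
    ∑ j ∈ Ico a n, min (e j) k ≤ (c - a) * k + ∑ j ∈ Ico c n, e j := by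
  rw [← sum_Ico_consecutive _ hac hcn]
  gcongr with j
  · calc _ ≤ ∑ _ ∈ Ico a c, k := sum_le_sum fun _ _ => min_le_right _ _
      _ = (c - a) * k := by simp
  · exact min_le_left _ _

lemma sum_Ico_min_eq {e : ℕ → ℕ} {k a c n : ℕ} (hac : a ≤ c) (hcn : c ≤ n)
    (hlarge : ∀ j ∈ Ico a c, k ≤ e j) (hsmall : ∀ j ∈ Ico c n, e j ≤ k) :
    ∑ j ∈ Ico a n, min (e j) k = (c - a) * k + ∑ j ∈ Ico c n, e j := by
  rw [← sum_Ico_consecutive _ hac hcn, sum_congr rfl fun j hj => min_eq_right (hlarge j hj),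
    sum_congr rfl fun j hj => min_eq_left (hsmall j hj)]
  simp

end Finset

lemma Antitone.exists_lt_iff_lt {e : ℕ → ℕ} (he : Antitone e) {n k : ℕ} (h : e n ≤ k) :
    ∃ c ≤ n, ∀ j, k < e j ↔ j < c := by
  classical
  have hex : ∃ c, e c ≤ k := ⟨n, h⟩
  refine ⟨Nat.find hex, Nat.find_min' hex h, fun j => ⟨fun hj => ?_, fun hj => ?_⟩⟩
  · by_contra! hc
    exact (he hc).trans (Nat.find_spec hex) |>.not_gt hj
  · exact not_le.mp (Nat.find_min hex hj)

lemma two_mul_add_two_le_of_even {k t D S : ℕ} (hk : 1 ≤ k) (hkt : k ≤ t) (hDk : D ≤ k)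
    (hS : 1 ≤ S) (heven : Even ((t + 1) * D + S)) :
    2 * (k * D) + 2 ≤ k * (k - 1) + ((t + 1) * D + S) := by
  obtain ⟨k, rfl⟩ := Nat.exists_eq_add_of_le' hk
  obtain ⟨r, rfl⟩ := Nat.exists_eq_add_of_le hkt
  rw [Nat.add_sub_cancel]
  rcases Nat.lt_or_ge 1 S with hS2 | hS1
  · nlinarith
  · obtain rfl : S = 1 := by omega
    rw [Nat.even_add_one, Nat.not_even_iff_odd, Nat.odd_mul] at heven
    obtain ⟨⟨a, ha⟩, ⟨b, hb⟩⟩ := heven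
    rcases Nat.eq_zero_or_pos r with rfl | hr
    · have : D + 1 ≤ k + 1 := by omega
      nlinarith
    · nlinarith

namespace SimpleGraph

variable {V : Type*} [Fintype V] [DecidableEq V] (G : SimpleGraph V) [DecidableRel G.Adj]

lemma degree_edge {s t : V} (h : s ≠ t) (v : V) :
    (edge s t).degree v = if v = s ∨ v = t then 1 else 0 := by
  rw [← card_neighborFinset_eq_degree]
  split_ifs with hv
  · rcases hv with rfl | rfl
    · convert card_singleton t
      ext w; simp only [mem_neighborFinset, edge_adj, mem_singleton]; grind
    · convert card_singleton s
      ext w; simp only [mem_neighborFinset, edge_adj, mem_singleton]; grind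
  · convert card_empty
    ext w; simp only [mem_neighborFinset, edge_adj, notMem_empty]; grind

lemma edge_degree_add_edge_degree {t m u v : V} (htm : t ≠ m) (htu : t ≠ u) (hmv : m ≠ v)
    (huv : u ≠ v) (w : V) :
    (edge t u).degree w + (edge m v).degree w = (edge u v).degree w + (edge t m).degree w := by
  rw [degree_edge htu, degree_edge hmv, degree_edge huv, degree_edge htm]
  grind

lemma degree_sup_edge {s t : V} (hn : ¬G.Adj s t) (v : V) :
    (G ⊔ edge s t).degree v = G.degree v + (edge s t).degree v := by
  simp only [← card_neighborFinset_eq_degree, neighborFinset_sup]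
  exact card_union_of_disjoint (disjoint_neighborFinset_of_disjoint _ _ _ (G.disjoint_edge.2 hn))

lemma degree_sdiff_edge {s t : V} (h : G.Adj s t) (v : V) :
    (G \ edge s t).degree v + (edge s t).degree v = G.degree v := by
  simp only [← card_neighborFinset_eq_degree, neighborFinset_sdiff]
  refine card_sdiff_add_card_eq_card fun w hw => ?_
  rw [mem_neighborFinset] at hw ⊢
  exact G.edge_le_iff.2 (Or.inr h) hw

lemma exists_mem_not_adj_of_degree_le {t m : V} (hadj : G.Adj t m) {C : Finset V}
    (hmC : m ∉ C) (hC : G.degree t ≤ #C) : ∃ u ∈ C, ¬G.Adj t u := by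
  by_contra! hsub
  have : C ⊆ (G.neighborFinset t).erase m := fun u hu =>
    mem_erase.mpr ⟨ne_of_mem_of_not_mem hu hmC, (G.mem_neighborFinset _ _).mpr (hsub u hu)⟩
  have := card_le_card this
  rw [card_erase_of_mem ((G.mem_neighborFinset _ _).mpr hadj),
    card_neighborFinset_eq_degree] at this
  have : 0 < G.degree t := G.degree_pos_iff_exists_adj t |>.mpr ⟨m, hadj⟩
  omega

lemma exists_adj_not_adj_of_degree_lt {t m u : V} (hmt : G.Adj m t) (hut : ¬G.Adj u t)
    (hlt : G.degree m < G.degree u) : ∃ v, G.Adj u v ∧ v ≠ m ∧ ¬G.Adj m v := by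
  by_contra! hsub
  have : (G.neighborFinset u).erase m ⊆ (G.neighborFinset m).erase t := fun v hv => by
    rw [mem_erase, mem_neighborFinset] at hv ⊢
    exact ⟨fun hvt => hut (hvt ▸ hv.2), hsub v hv.2 hv.1⟩
  have hle := pred_card_le_card_erase.trans (card_le_card this)
  rw [card_erase_of_mem ((G.mem_neighborFinset _ _).mpr hmt)] at hle
  simp only [card_neighborFinset_eq_degree] at hle
  have : 0 < G.degree m := G.degree_pos_iff_exists_adj m |>.mpr ⟨t, hmt⟩
  omega

lemma card_filter_adj_add_card_filter_adj (A : Finset V) (v : V) :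
    #{w ∈ A | G.Adj v w} + #{w ∈ Aᶜ | G.Adj v w} = G.degree v := by
  rw [← card_union_of_disjoint (disjoint_compl_right.mono (filter_subset _ _) (filter_subset _ _)),
    ← filter_union, union_compl, ← neighborFinset_eq_filter, card_neighborFinset_eq_degree]

theorem sum_degree_le_erdosGallai (A : Finset V) :
    ∑ v ∈ A, G.degree v ≤ #A * (#A - 1) + ∑ w ∈ Aᶜ, min (G.degree w) #A := by
  have hinside : ∀ v ∈ A, #{w ∈ A | G.Adj v w} ≤ #A - 1 := fun v hv => by
    rw [← card_erase_of_mem hv]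
    exact card_le_card fun w hw => by
      rw [mem_filter] at hw
      exact mem_erase.mpr ⟨(G.ne_of_adj hw.2).symm, hw.1⟩
  have houtside : ∀ w ∈ Aᶜ, #{v ∈ A | G.Adj v w} ≤ min (G.degree w) #A := fun w _ => by
    refine le_min ?_ (card_filter_le _ _)
    rw [← card_neighborFinset_eq_degree]
    exact card_le_card fun v hv => (G.mem_neighborFinset _ _).mpr (G.adj_symm (mem_filter.mp hv).2)
  calc ∑ v ∈ A, G.degree v
      = ∑ v ∈ A, #{w ∈ A | G.Adj v w} + ∑ v ∈ A, #{w ∈ Aᶜ | G.Adj v w} := by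
        rw [← sum_add_distrib]
        exact sum_congr rfl fun v _ => (G.card_filter_adj_add_card_filter_adj A v).symm
    _ = ∑ v ∈ A, #{w ∈ A | G.Adj v w} + ∑ w ∈ Aᶜ, #{v ∈ A | G.Adj v w} := by
        congr 1; exact sum_card_bipartiteAbove_eq_sum_card_bipartiteBelow G.Adj
    _ ≤ ∑ v ∈ A, (#A - 1) + ∑ w ∈ Aᶜ, min (G.degree w) #A :=
        add_le_add (sum_le_sum hinside) (sum_le_sum houtside)
    _ = #A * (#A - 1) + ∑ w ∈ Aᶜ, min (G.degree w) #A := by rw [sum_const, smul_eq_mul]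

end SimpleGraph

open SimpleGraph

def IsGraphic {V : Type*} [Fintype V] (d : V → ℕ) : Prop :=
  ∃ (G : SimpleGraph V) (_ : DecidableRel G.Adj), ∀ v, G.degree v = d v

lemma isGraphic_zero {V : Type*} [Fintype V] : IsGraphic fun _ : V => 0 :=
  ⟨⊥, inferInstance, bot_degree⟩

-- If `t m` is already an edge, some `u ∈ C` is not adjacent to `t`, and `u`, having more
-- neighbours than `m`, has one, `v`, outside `N(m) ∪ {m}`: replace `u v` by `t u` and `m v`.
lemma IsGraphic.add_edge {V : Type*} [Fintype V] [DecidableEq V] {d : V → ℕ} (hd : IsGraphic d)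
    {t m : V} (htm : t ≠ m) {C : Finset V} (htC : t ∉ C) (hmC : m ∉ C)
    (hC : ∀ u ∈ C, d m < d u) (hdt : d t ≤ #C) :
    IsGraphic fun w => d w + if w = t ∨ w = m then 1 else 0 := by
  obtain ⟨G, _, hG⟩ := hd
  simp_rw [← degree_edge htm, ← hG]
  by_cases hadj : G.Adj t m
  · obtain ⟨u, huC, htu⟩ := G.exists_mem_not_adj_of_degree_le hadj hmC (hG t ▸ hdt)
    obtain ⟨v, huv, hvm, hmv⟩ := G.exists_adj_not_adj_of_degree_lt (G.adj_symm hadj)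
      (fun h => htu (G.adj_symm h)) (by rw [hG, hG]; exact hC u huC)
    have hut : u ≠ t := ne_of_mem_of_not_mem huC htC
    have hvt : v ≠ t := fun h => htu (G.adj_symm (h ▸ huv))
    have h₁ : ¬(G \ edge u v).Adj t u := fun h => htu h.1
    have h₂ : ¬(G \ edge u v ⊔ edge t u).Adj m v := by
      rintro (h | h)
      · exact hmv h.1
      · grind
    refine ⟨G \ edge u v ⊔ edge t u ⊔ edge m v, inferInstance, fun w => ?_⟩
    beta_reduce
    rw [degree_sup_edge _ h₂, degree_sup_edge _ h₁, ← G.degree_sdiff_edge huv w]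
    have := edge_degree_add_edge_degree htm hut.symm hvm.symm (G.ne_of_adj huv) w
    omega
  · exact ⟨G ⊔ edge t m, inferInstance, G.degree_sup_edge hadj⟩

-- A sequence `e 0 ≥ ⋯ ≥ e (n - 1)` is handled as an antitone `e : ℕ → ℕ` vanishing from `n` on.
def ErdosGallaiCondition (n : ℕ) (e : ℕ → ℕ) : Prop :=
  ∀ k, 1 ≤ k → k ≤ n → ∑ j ∈ range k, e j ≤ k * (k - 1) + ∑ j ∈ Ico k n, min (e j) k

structure IsChoudumPair (n : ℕ) (e : ℕ → ℕ) (t m : ℕ) : Prop where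
  lt : t < m
  lt_n : m < n
  pos : 0 < e m
  eq_zero : ∀ j, m < j → e j = 0
  eq_head : ∀ i ≤ t, e i = e 0
  lt_head : ∀ j, t < j → j ≠ m → e j < e 0
  head_le : e 0 ≤ m

section Sequences

variable {n : ℕ} {e : ℕ → ℕ}

lemma exists_isChoudumPair (he : Antitone e) (hz : ∀ j, n ≤ j → e j = 0)
    (hEG : ErdosGallaiCondition n e) (h0 : 0 < e 0) : ∃ t m, IsChoudumPair n e t m := by
  obtain ⟨c₁, hc₁n, hc₁⟩ := he.exists_lt_iff_lt (k := 0) (hz n le_rfl).le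
  obtain ⟨c₂, -, hc₂⟩ := he.exists_lt_iff_lt (k := e 0 - 1) (by rw [hz n le_rfl]; omega)
  have h0c₁ := (hc₁ 0).mp h0
  have h0c₂ := (hc₂ 0).mp (by omega)
  have hc₂c₁ : c₂ ≤ c₁ := by
    by_contra! h
    have := (hc₂ c₁).mpr h
    have := (hc₁ c₁).not.mpr (lt_irrefl _)
    omega
  have hhead : e 0 ≤ c₁ - 1 := by
    have hEG₁ := hEG 1 le_rfl (by omega)
    have htail : ∑ j ∈ Ico c₁ n, e j = 0 :=
      sum_eq_zero fun j hj => by have := (hc₁ j).not.mpr (by simp at hj; omega); omega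
    have := sum_Ico_min_le e 1 (by omega : 1 ≤ c₁) hc₁n
    rw [sum_range_one] at hEG₁
    omega
  refine ⟨min c₂ (c₁ - 1) - 1, c₁ - 1, ⟨by omega, by omega, (hc₁ _).mpr (by omega),
    fun j hj => ?_, fun i hi => ?_, fun j hj hjm => ?_, hhead⟩⟩
  · have := (hc₁ j).not.mpr (by omega); omega
  · have := (hc₂ i).mpr (by omega); have := he (Nat.zero_le i); omega
  · have := (hc₁ j).not; have := (hc₂ j).not; omega

namespace IsChoudumPair

variable {t m : ℕ} (hp : IsChoudumPair n e t m)
include hp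

lemma sum_range_eq {k : ℕ} (hk : k ≤ t + 1) : ∑ j ∈ range k, e j = k * e 0 := by
  rw [sum_congr rfl fun j hj => hp.eq_head j (by simp at hj; omega)]
  simp

lemma le_sum_Ico {c : ℕ} (hc : c ≤ m) : e m ≤ ∑ j ∈ Ico c n, e j :=
  single_le_sum (fun _ _ => Nat.zero_le _) (mem_Ico.mpr ⟨hc, hp.lt_n⟩)

lemma sum_range_add_one_le (he : Antitone e) (hEG : ErdosGallaiCondition n e) {k : ℕ}
    (hk : 1 ≤ k) (hkt : k ≤ t) (hmk : e m ≤ k) (hk0 : k < e 0) :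
    ∑ j ∈ range k, e j + 1 ≤ k * (k - 1) + ∑ j ∈ Ico k n, min (e j) k := by
  obtain ⟨c, hcn, hc⟩ := he.exists_lt_iff_lt (k := k) (by rw [hp.eq_zero n hp.lt_n]; omega)
  have htc : t < c := (hc t).mp (by rw [hp.eq_head t le_rfl]; omega)
  have hcm : c ≤ m := by by_contra! h; have := (hc m).mpr h; omega
  have hRk : ∑ j ∈ Ico k n, min (e j) k = (c - k) * k + ∑ j ∈ Ico c n, e j :=
    sum_Ico_min_eq (by omega) hcn (fun j hj => by have := (hc j).mpr (by simp at hj; omega); omega)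
      (fun j hj => by have := (hc j).not.mpr (by simp at hj; omega); omega)
  have hRt := sum_Ico_min_le e (t + 1) (by omega : t + 1 ≤ c) hcn
  have hEGt := hEG (t + 1) (by omega) (by omega)
  have hT : 1 ≤ ∑ j ∈ Ico c n, e j := hp.pos.trans_le (hp.le_sum_Ico hcm)
  generalize ∑ j ∈ Ico c n, e j = T at hT hRk hRt
  rw [hp.sum_range_eq le_rfl, Nat.add_sub_cancel] at hEGt
  rw [hp.sum_range_eq (by omega), hRk]
  have hTt : (t + 1) * e 0 ≤ (t + 1) * t + ((c - (t + 1)) * (t + 1) + T) := hEGt.trans (by omega)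
  zify [hk, (by omega : k ≤ c), (by omega : t + 1 ≤ c)] at hTt ⊢
  -- If `e 0 < c` the slack is `T ≥ 1`; otherwise the inequality at `t + 1` gives
  -- `T ≥ (t + 1) (e 0 - c + 1)`, which beats the `k (e 0 - c + 1)` needed.
  rcases le_or_gt (e 0) (c - 1) with hD | hD
  · have : (k : ℤ) * e 0 ≤ k * (c - 1) := by gcongr; omega
    nlinarith
  · nlinarith [mul_nonneg (by omega : (0 : ℤ) ≤ t + 1 - k) (by omega : (0 : ℤ) ≤ e 0 - c)]

lemma sum_range_add_two_le (he : Antitone e) (heven : Even (∑ j ∈ range n, e j)) {k : ℕ}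
    (hk : 1 ≤ k) (hkt : k ≤ t) (h0k : e 0 ≤ k) :
    ∑ j ∈ range k, e j + 2 ≤ k * (k - 1) + ∑ j ∈ Ico k n, min (e j) k := by
  have := hp.lt
  have := hp.lt_n
  have hmin : ∑ j ∈ Ico k n, min (e j) k = ∑ j ∈ Ico k n, e j :=
    sum_congr rfl fun j _ => min_eq_left ((he (Nat.zero_le j)).trans h0k)
  have hsplit := sum_range_add_sum_Ico e (by omega : k ≤ n)
  have htot := sum_range_add_sum_Ico e (by omega : t + 1 ≤ n)
  have hS : 1 ≤ ∑ j ∈ Ico (t + 1) n, e j := hp.pos.trans_le (hp.le_sum_Ico hp.lt)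
  rw [hp.sum_range_eq le_rfl] at htot
  rw [← htot, hp.sum_range_eq (by omega)] at hsplit
  rw [← htot] at heven
  have := two_mul_add_two_le_of_even hk hkt h0k hS heven
  rw [hmin, hp.sum_range_eq (by omega)]
  omega

variable {e' : ℕ → ℕ} (he' : ∀ j, e j = e' j + if j = t ∨ j = m then 1 else 0)
include he'

lemma antitone (he : Antitone e) : Antitone e' := by
  refine antitone_nat_of_succ_le fun j => ?_
  have := he (Nat.le_add_right j 1)
  have := he' j
  have := he' (j + 1)
  have := hp.lt
  have hhead : j + 1 ≤ t → e j = e 0 ∧ e (j + 1) = e 0 :=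
    fun h => ⟨hp.eq_head j (by omega), hp.eq_head (j + 1) h⟩
  have hnext : j = t → j + 1 ≠ m → e (j + 1) < e j := by
    rintro rfl hjm
    rw [hp.eq_head j le_rfl]
    exact hp.lt_head (j + 1) (by omega) hjm
  have hlast : j = m → e (j + 1) = 0 := fun h => hp.eq_zero (j + 1) (by omega)
  split_ifs at * <;> omega

-- Lowering costs the left side `[t < k] + [m < k]` and the right side
-- `[k ≤ t ∧ e t ≤ k] + [k ≤ m ∧ e m ≤ k]`; when the latter is larger, `k ≤ t` and the two
-- lemmas above supply the missing slack.
lemma erdosGallaiCondition (he : Antitone e) (hEG : ErdosGallaiCondition n e)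
    (heven : Even (∑ j ∈ range n, e j)) : ErdosGallaiCondition n e' := by
  intro k hk hkn
  have hL : ∑ j ∈ range k, e j = ∑ j ∈ range k, e' j +
      ((if t ∈ range k then 1 else 0) + (if m ∈ range k then 1 else 0)) := by
    rw [← sum_ite_eq_or _ hp.lt.ne fun _ => 1, ← sum_add_distrib]
    exact sum_congr rfl fun j _ => he' j
  have hR : ∑ j ∈ Ico k n, min (e j) k = ∑ j ∈ Ico k n, min (e' j) k +
      ((if t ∈ Ico k n then (if e t ≤ k then 1 else 0) else 0) +
        (if m ∈ Ico k n then (if e m ≤ k then 1 else 0) else 0)) := by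
    rw [← sum_ite_eq_or _ hp.lt.ne fun j => if e j ≤ k then 1 else 0, ← sum_add_distrib]
    refine sum_congr rfl fun j _ => ?_
    rw [he' j]
    split_ifs <;> omega
  have := hEG k hk hkn
  have hA : k ≤ t → e m ≤ k → k < e 0 →
      ∑ j ∈ range k, e j + 1 ≤ k * (k - 1) + ∑ j ∈ Ico k n, min (e j) k :=
    hp.sum_range_add_one_le he hEG hk
  have hB : k ≤ t → e 0 ≤ k →
      ∑ j ∈ range k, e j + 2 ≤ k * (k - 1) + ∑ j ∈ Ico k n, min (e j) k :=
    fun hkt => hp.sum_range_add_two_le he heven hk hkt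
  have := hp.eq_head t le_rfl
  have := hp.lt
  have := hp.lt_n
  simp only [mem_range, mem_Ico] at hL hR
  split_ifs at hL hR <;> omega

lemma isGraphic_of_lower (he : Antitone e) (hG' : IsGraphic fun i : Fin n => e' i) :
    IsGraphic fun i : Fin n => e i := by
  have htm := hp.lt
  have hmn := hp.lt_n
  set tF : Fin n := ⟨t, htm.trans hmn⟩
  set mF : Fin n := ⟨m, hmn⟩
  set C : Finset (Fin n) := ({u : Fin n | (u : ℕ) < m} : Finset _).erase tF
  have hC : ∀ u ∈ C, e' mF < e' u := by
    intro u hu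
    show e' m < e' u
    simp only [C, mem_erase, mem_filter, mem_univ, true_and, ne_eq, tF, Fin.ext_iff] at hu
    have := he' u
    have := he' m
    have := he hu.2.le
    have := hp.pos
    split_ifs at * <;> omega
  have hdt : e' tF ≤ #C := by
    rw [card_erase_of_mem (by simp [tF, htm]), Fin.card_filter_val_lt, min_eq_right hmn.le]
    have ht := he' t
    simp only [true_or, if_true] at ht
    have := hp.head_le
    have := hp.eq_head t le_rfl
    show e' t ≤ m - 1
    omega
  convert hG'.add_edge (Fin.ne_of_val_ne htm.ne) (notMem_erase _ _) (by simp [mF]) hC hdt with i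
  rw [he' i]
  simp [tF, mF, Fin.ext_iff]

end IsChoudumPair

theorem ErdosGallaiCondition.isGraphic (hEG : ErdosGallaiCondition n e) (he : Antitone e)
    (hz : ∀ j, n ≤ j → e j = 0) (heven : Even (∑ j ∈ range n, e j)) :
    IsGraphic fun i : Fin n => e i := by
  induction hs : ∑ j ∈ range n, e j using Nat.strong_induction_on generalizing e with
  | _ s ih =>
  rcases (Nat.zero_le (e 0)).eq_or_lt with h0 | h0
  · have : (fun i : Fin n => e i) = fun _ => 0 :=
      funext fun i => Nat.le_zero.mp (h0 ▸ he (Nat.zero_le i))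
    exact this ▸ isGraphic_zero
  obtain ⟨t, m, hp⟩ := exists_isChoudumPair he hz hEG h0
  have hpos : ∀ j, j = t ∨ j = m → 0 < e j := by
    rintro j (rfl | rfl)
    · exact hp.pos.trans_le (he hp.lt.le)
    · exact hp.pos
  set e' : ℕ → ℕ := fun j => e j - if j = t ∨ j = m then 1 else 0
  have he' : ∀ j, e j = e' j + if j = t ∨ j = m then 1 else 0 := fun j => by
    have := hpos j
    simp only [e']
    split_ifs <;> omega
  have hsum : ∑ j ∈ range n, e j = ∑ j ∈ range n, e' j + 2 := by
    rw [sum_congr rfl fun j _ => he' j, sum_add_distrib, sum_ite_eq_or _ hp.lt.ne fun _ => 1]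
    simp [hp.lt.trans hp.lt_n, hp.lt_n]
  refine hp.isGraphic_of_lower he' he (ih _ (by omega) (hp.erdosGallaiCondition he' he hEG heven)
    (hp.antitone he' he) (fun j hj => ?_) ?_ rfl)
  · have := hz j hj
    have := he' j
    omega
  · rw [hsum] at heven
    exact (Nat.even_add.mp heven).mpr even_two

end Sequences

lemma Fin.sum_filter_val_eq_sum_range_filter {M : Type*} [AddCommMonoid M] (n : ℕ)
    (p : ℕ → Prop) [DecidablePred p] (f : ℕ → M) :
    ∑ i ∈ univ.filter (fun i : Fin n => p i), f i = ∑ j ∈ (range n).filter p, f j := by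
  rw [sum_filter, sum_filter, Fin.sum_univ_eq_sum_range (fun j => if p j then f j else 0)]

lemma Fin.exists_antitone_extend {n : ℕ} {d : Fin n → ℕ} (hd : Antitone d) :
    ∃ e : ℕ → ℕ, Antitone e ∧ (∀ j, n ≤ j → e j = 0) ∧ (fun i : Fin n => e i) = d := by
  refine ⟨fun j => if h : j < n then d ⟨j, h⟩ else 0, fun a b hab => ?_, fun j hj => ?_,
    funext fun i => by simp⟩
  · dsimp only
    split_ifs with hb ha
    · exact hd (Fin.mk_le_mk.mpr hab)
    · omega
    · exact Nat.zero_le _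
    · exact le_rfl
  · simp [hj.not_gt]

lemma isGraphic_of_erdosGallai {n : ℕ} {d : Fin n → ℕ} (hd : Antitone d) (heven : Even (∑ i, d i))
    (hEG : ∀ k : ℕ, 1 ≤ k → k ≤ n →
      ∑ i ∈ univ.filter (fun i : Fin n => (i : ℕ) < k), d i ≤
        k * (k - 1) + ∑ i ∈ univ.filter (fun i : Fin n => k ≤ (i : ℕ)), min (d i) k) :
    IsGraphic d := by
  obtain ⟨e, he, hz, rfl⟩ := Fin.exists_antitone_extend hd
  refine ErdosGallaiCondition.isGraphic (fun k hk hkn => ?_) he hz ?_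
  · have := hEG k hk hkn
    rwa [Fin.sum_filter_val_eq_sum_range_filter n (· < k) e,
      Fin.sum_filter_val_eq_sum_range_filter n (k ≤ ·) fun j => min (e j) k,
      show (range n).filter (· < k) = range k by ext; simp; omega,
      show (range n).filter (k ≤ ·) = Ico k n by ext; simp; omega] at this
  · rwa [← Fin.sum_univ_eq_sum_range]

/-- **Erdős–Gallai theorem.** A non-increasing sequence `d : Fin n → ℕ` is the degree
sequence of a simple graph on labeled vertices `0, …, n-1` if and only if the sum of the
degrees is even and, for every `1 ≤ k ≤ n`,
`∑_{i<k} d i ≤ k(k-1) + ∑_{i≥k} min (d i) k`. -/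
theorem erdos_gallai (n : ℕ) (d : Fin n → ℕ) (hd : Antitone d) :
    (∃ (G : SimpleGraph (Fin n)) (_ : DecidableRel G.Adj), ∀ i : Fin n, G.degree i = d i) ↔
      Even (∑ i, d i) ∧
        ∀ k : ℕ, 1 ≤ k → k ≤ n →
          ∑ i ∈ univ.filter (fun i : Fin n => (i : ℕ) < k), d i ≤
            k * (k - 1) +
              ∑ i ∈ univ.filter (fun i : Fin n => k ≤ (i : ℕ)), min (d i) k := by
  refine ⟨?_, fun ⟨heven, hEG⟩ => isGraphic_of_erdosGallai hd heven hEG⟩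
  rintro ⟨G, _, hG⟩
  obtain rfl : (fun i => G.degree i) = d := funext hG
  refine ⟨G.sum_degrees_eq_twice_card_edges ▸ even_two_mul _, fun k _ hkn => ?_⟩
  simpa [Fin.card_filter_val_lt, hkn, compl_filter] using
    G.sum_degree_le_erdosGallai {i | (i : ℕ) < k}
end

section
/- Let V be a finite set, d : V → ℕ, let u, v, w ∈ V be pairwise distinct with S = {u, v, w}, let x ∉ V, and let F be a set of unordered pairs of distinct elements of V containing no pair with both elements in S. Then there exists a simple graph G on V with deg_G(y) = d(y) for all y ∈ V, with no edge of G in F, and with exactly one edge of G having both endpoints in S, if and only if there exists a simple graph G' on V ∪ {x} with deg_{G'}(y) = d(y) for all y ∈ V, deg_{G'}(x) = 2, every neighbor of x in G' belonging to S, no edge of G' having both endpoints in S, and no edge of G' in F. -/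
/-!
Given a realization `G` whose only edge inside `S` is `ab`, subdivide `ab` by the new vertex `x`:
deleting `ab` lowers the degrees of `a` and `b` by one, and the edges `xa`, `xb` restore them,
while `x` gets degree two and no edge inside `S` is left. Conversely, the two neighbours `a`, `b`
of `x` lie in `S` and are not adjacent, so deleting `x` and adding the edge `ab` undoes the
subdivision; `ab` is not forbidden because `F` has no pair inside `S`, and it is the only edge
inside `S` because `G'` has none.
-/

open Finset

theorem Sym2.sum_ite_mk_eq {V : Type*} [Fintype V] [DecidableEq V] (y : V) (e : Sym2 V) :
    ∑ q, (if s(y, q) = e then 1 else 0 : ℕ) = if y ∈ e then 1 else 0 := by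
  by_cases hy : y ∈ e
  · obtain ⟨z, rfl⟩ : ∃ z, e = s(y, z) := ⟨_, (Sym2.other_spec hy).symm⟩
    simp only [Sym2.congr_right, hy, if_true]
    exact Finset.sum_ite_eq' _ _ _ |>.trans (if_pos (mem_univ z))
  · have : ∀ q, s(y, q) ≠ e := fun q h => hy (h ▸ Sym2.mem_mk_left y q)
    simp [this, hy]

namespace SimpleGraph

variable {V : Type*}

theorem degree_eq_sum_ite [Fintype V] (G : SimpleGraph V) [DecidableRel G.Adj] (y : V) :
    G.degree y = ∑ q, if G.Adj y q then 1 else 0 := by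
  simpa using G.degree_eq_sum_if_adj (R := ℕ) y

structure IsEdgeSubdivision (G : SimpleGraph V) (G' : SimpleGraph (Option V)) (a b : V) :
    Prop where
  ne : a ≠ b
  adj_iff : ∀ p q, G.Adj p q ↔ G'.Adj (some p) (some q) ∨ s(p, q) = s(a, b)
  not_adj : ¬ G'.Adj (some a) (some b)
  adj_none_iff : ∀ z, G'.Adj none z ↔ z = some a ∨ z = some b

namespace IsEdgeSubdivision

variable {G : SimpleGraph V} {G' : SimpleGraph (Option V)} {a b : V}

theorem adj_some_none_iff (h : IsEdgeSubdivision G G' a b) (y : V) :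
    G'.Adj (some y) none ↔ y ∈ s(a, b) := by
  rw [G'.adj_comm, h.adj_none_iff]
  simp

theorem adj_some_iff (h : IsEdgeSubdivision G G' a b) {p q : V} :
    G'.Adj (some p) (some q) ↔ G.Adj p q ∧ s(p, q) ≠ s(a, b) := by
  refine ⟨fun hpq => ⟨(h.adj_iff p q).mpr (.inl hpq), fun he => h.not_adj ?_⟩,
    fun ⟨hpq, hne⟩ => ((h.adj_iff p q).mp hpq).resolve_right hne⟩
  rcases Sym2.eq_iff.mp he with ⟨rfl, rfl⟩ | ⟨rfl, rfl⟩
  exacts [hpq, hpq.symm]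

theorem not_adj_some_iff (h : IsEdgeSubdivision G G' a b) {p q : V} :
    ¬ G'.Adj (some p) (some q) ↔ (G.Adj p q ↔ s(p, q) = s(a, b)) := by
  refine ⟨fun hpq => (h.adj_iff p q).trans (or_iff_right hpq), fun hS hpq => ?_⟩
  obtain ⟨hG, hne⟩ := h.adj_some_iff.mp hpq
  exact hne (hS.mp hG)

variable [Fintype V] [DecidableEq V]

theorem degree_some [DecidableRel G.Adj] [DecidableRel G'.Adj]
    (h : IsEdgeSubdivision G G' a b) (y : V) : G'.degree (some y) = G.degree y := by
  have split : ∀ q, (if G.Adj y q then 1 else 0 : ℕ) =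
      (if G'.Adj (some y) (some q) then 1 else 0) + if s(y, q) = s(a, b) then 1 else 0 := by
    intro q
    by_cases hq : s(y, q) = s(a, b)
    · have : ¬ G'.Adj (some y) (some q) := fun hyq => (h.adj_some_iff.mp hyq).2 hq
      simp [h.adj_iff, hq, this]
    · simp [h.adj_iff, hq]
  rw [degree_eq_sum_ite, degree_eq_sum_ite, Fintype.sum_option, Finset.sum_congr rfl
    fun q _ => split q, Finset.sum_add_distrib, Sym2.sum_ite_mk_eq, add_comm]
  simp [h.adj_some_none_iff]

theorem degree_none [DecidableRel G'.Adj] (h : IsEdgeSubdivision G G' a b) :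
    G'.degree none = 2 := by
  have : G'.neighborFinset none = {some a, some b} := by
    ext z
    simp [h.adj_none_iff]
  rw [← card_neighborFinset_eq_degree, this, card_pair (by simpa using h.ne)]

end IsEdgeSubdivision

theorem map_some_adj_some (H : SimpleGraph V) (p q : V) :
    (H.map .some).Adj (some p) (some q) ↔ H.Adj p q :=
  map_adj_apply (f := .some)

theorem map_some_not_adj_none (H : SimpleGraph V) (z : Option V) :
    ¬ (H.map .some).Adj none z := by
  rw [map_adj']
  rintro ⟨-, p, q, -, h, -⟩
  cases h

def subdivideEdge (G : SimpleGraph V) (a b : V) : SimpleGraph (Option V) :=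
  (G.deleteEdges {s(a, b)}).map .some ⊔ edge none (some a) ⊔ edge none (some b)

theorem subdivideEdge_adj_some (G : SimpleGraph V) (a b p q : V) :
    (G.subdivideEdge a b).Adj (some p) (some q) ↔ G.Adj p q ∧ s(p, q) ≠ s(a, b) := by
  simp [subdivideEdge, map_some_adj_some, edge_adj]

theorem subdivideEdge_adj_none (G : SimpleGraph V) (a b : V) (z : Option V) :
    (G.subdivideEdge a b).Adj none z ↔ z = some a ∨ z = some b := by
  cases z <;> simp [subdivideEdge, map_some_not_adj_none, edge_adj]

theorem isEdgeSubdivision_subdivideEdge {G : SimpleGraph V} {a b : V} (hab : G.Adj a b) :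
    IsEdgeSubdivision G (G.subdivideEdge a b) a b where
  ne := hab.ne
  adj_iff p q := by
    rw [subdivideEdge_adj_some]
    by_cases he : s(p, q) = s(a, b)
    · exact iff_of_true (by rwa [← mem_edgeSet, he]) (.inr he)
    · simp [he]
  not_adj := by simp [subdivideEdge_adj_some]
  adj_none_iff := G.subdivideEdge_adj_none a b

theorem isEdgeSubdivision_comap_sup_edge {G' : SimpleGraph (Option V)} {a b : V} (hab : a ≠ b)
    (hnot : ¬ G'.Adj (some a) (some b)) (hnone : ∀ z, G'.Adj none z ↔ z = some a ∨ z = some b) :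
    IsEdgeSubdivision (G'.comap some ⊔ edge a b) G' a b where
  ne := hab
  adj_iff p q := by
    rw [sup_adj, comap_adj, adj_edge, eq_comm (a := s(a, b))]
    refine or_congr_right (and_iff_left_of_imp fun he hpq => hab ?_)
    exact Sym2.mk_isDiag_iff.mp (he ▸ Sym2.mk_isDiag_iff.mpr hpq)
  not_adj := hnot
  adj_none_iff := hnone

theorem exists_adj_none_iff_of_degree_none_eq_two [Fintype V] [DecidableEq V]
    {G' : SimpleGraph (Option V)} [DecidableRel G'.Adj] (h : G'.degree none = 2) :
    ∃ a b : V, a ≠ b ∧ ∀ z, G'.Adj none z ↔ z = some a ∨ z = some b := by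
  obtain ⟨x, y, hxy, hN⟩ := card_eq_two.mp ((card_neighborFinset_eq_degree G' none).trans h)
  have hadj : ∀ z, G'.Adj none z ↔ z = x ∨ z = y := fun z => by
    rw [← mem_neighborFinset, hN, mem_insert, mem_singleton]
  obtain ⟨a, rfl⟩ := Option.ne_none_iff_exists'.mp ((hadj x).mpr (.inl rfl)).ne'
  obtain ⟨b, rfl⟩ := Option.ne_none_iff_exists'.mp ((hadj y).mpr (.inr rfl)).ne'
  exact ⟨a, b, fun hab => hxy (congrArg some hab), hadj⟩

section Triangle

variable {u v w : V}

theorem forall_mem_triangle {R : V → V → Prop} (refl : ∀ p, R p p) (symm : ∀ p q, R p q → R q p)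
    (huv : R u v) (huw : R u w) (hvw : R v w) :
    ∀ p ∈ ({u, v, w} : Set V), ∀ q ∈ ({u, v, w} : Set V), R p q := by
  simp only [Set.mem_insert_iff, Set.mem_singleton_iff]
  rintro p (rfl | rfl | rfl) q (rfl | rfl | rfl) <;> solve_by_elim

variable (H : SimpleGraph V)

theorem forall_mem_triangle_not_adj (huv : ¬ H.Adj u v) (huw : ¬ H.Adj u w) (hvw : ¬ H.Adj v w) :
    ∀ p ∈ ({u, v, w} : Set V), ∀ q ∈ ({u, v, w} : Set V), ¬ H.Adj p q :=
  forall_mem_triangle (fun _ => H.irrefl) (fun _ _ h h' => h h'.symm) huv huw hvw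

theorem ite_adj_triangle_eq_one_iff [DecidableRel H.Adj] (huv : u ≠ v) (huw : u ≠ w)
    (hvw : v ≠ w) :
    (if H.Adj u v then 1 else 0) + (if H.Adj u w then 1 else 0) +
        (if H.Adj v w then 1 else 0) = 1 ↔
      ∃ a ∈ ({u, v, w} : Set V), ∃ b ∈ ({u, v, w} : Set V), a ≠ b ∧
        ∀ p ∈ ({u, v, w} : Set V), ∀ q ∈ ({u, v, w} : Set V), H.Adj p q ↔ s(p, q) = s(a, b) := by
  have hne : u ≠ v ∧ u ≠ w ∧ v ≠ w ∧ v ≠ u ∧ w ≠ u ∧ w ≠ v :=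
    ⟨huv, huw, hvw, huv.symm, huw.symm, hvw.symm⟩
  constructor
  · intro h
    have of_pairs (a b : V) (hab : a ≠ b) :
        (H.Adj u v ↔ s(u, v) = s(a, b)) → (H.Adj u w ↔ s(u, w) = s(a, b)) →
        (H.Adj v w ↔ s(v, w) = s(a, b)) →
          ∀ p ∈ ({u, v, w} : Set V), ∀ q ∈ ({u, v, w} : Set V), H.Adj p q ↔ s(p, q) = s(a, b) :=
      forall_mem_triangle (R := fun p q => H.Adj p q ↔ s(p, q) = s(a, b))
        (fun p => iff_of_false H.irrefl fun h => hab (Sym2.mk_isDiag_iff.mp (h ▸ rfl)))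
        (fun p q => by rw [H.adj_comm, Sym2.eq_swap]; exact id)
    by_cases e1 : H.Adj u v <;> by_cases e2 : H.Adj u w <;> by_cases e3 : H.Adj v w <;>
      simp only [e1, e2, e3, if_true, if_false] at h <;> try omega
    · exact ⟨u, by simp, v, by simp, huv, of_pairs u v huv (by simp [e1])
        (by simp [e2, hne]) (by simp [e3, hne])⟩
    · exact ⟨u, by simp, w, by simp, huw, of_pairs u w huw (by simp [e1, hne])
        (by simp [e2]) (by simp [e3, hne])⟩
    · exact ⟨v, by simp, w, by simp, hvw, of_pairs v w hvw (by simp [e1, hne])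
        (by simp [e2, hne]) (by simp [e3])⟩
  · rintro ⟨a, ha, b, hb, hab, hS⟩
    have e1 := hS u (by simp) v (by simp)
    have e2 := hS u (by simp) w (by simp)
    have e3 := hS v (by simp) w (by simp)
    classical
    simp only [e1, e2, e3]
    simp only [Set.mem_insert_iff, Set.mem_singleton_iff] at ha hb
    rcases ha with rfl | rfl | rfl <;> rcases hb with rfl | rfl | rfl <;> simp_all

end Triangle

end SimpleGraph

open SimpleGraph in
/-- The graph `G'` lives on `Option V`, the new vertex `x` being `none`. -/
theorem size_three_cut_gadget_one_edge_general {V : Type*} [Fintype V] [DecidableEq V]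
    (d : V → ℕ) (u v w : V) (huv : u ≠ v) (huw : u ≠ w) (hvw : v ≠ w)
    (F : Set (Sym2 V))
    (hFS : ∀ a b : V, s(a, b) ∈ F → a ∉ ({u, v, w} : Set V) ∨ b ∉ ({u, v, w} : Set V)) :
    (∃ (G : SimpleGraph V) (_ : DecidableRel G.Adj),
        (∀ y, G.degree y = d y) ∧ (∀ e ∈ F, e ∉ G.edgeSet) ∧
          (if G.Adj u v then 1 else 0) + (if G.Adj u w then 1 else 0) +
            (if G.Adj v w then 1 else 0) = 1) ↔
      (∃ (G' : SimpleGraph (Option V)) (_ : DecidableRel G'.Adj),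
        (∀ y : V, G'.degree (some y) = d y) ∧ G'.degree none = 2 ∧
          (∀ z, G'.Adj none z → z = some u ∨ z = some v ∨ z = some w) ∧
          ¬ G'.Adj (some u) (some v) ∧ ¬ G'.Adj (some u) (some w) ∧
            ¬ G'.Adj (some v) (some w) ∧
          (∀ a b : V, s(a, b) ∈ F → ¬ G'.Adj (some a) (some b))) := by
  constructor
  · classical
    rintro ⟨G, _, hdeg, hF, hcount⟩
    obtain ⟨a, ha, b, hb, -, hS⟩ := (ite_adj_triangle_eq_one_iff G huv huw hvw).mp hcount
    have hsub := isEdgeSubdivision_subdivideEdge ((hS a ha b hb).mpr rfl)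
    refine ⟨G.subdivideEdge a b, inferInstance, fun y => (hsub.degree_some y).trans (hdeg y),
      hsub.degree_none, fun z hz => ?_, hsub.not_adj_some_iff.mpr (hS u (by simp) v (by simp)),
      hsub.not_adj_some_iff.mpr (hS u (by simp) w (by simp)),
      hsub.not_adj_some_iff.mpr (hS v (by simp) w (by simp)),
      fun p q hpq h => hF _ hpq (hsub.adj_some_iff.mp h).1⟩
    rcases (hsub.adj_none_iff z).mp hz with rfl | rfl
    · simpa using ha
    · simpa using hb
  · rintro ⟨G', _, hdeg, hdeg_none, hnbr, huv', huw', hvw', hF⟩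
    obtain ⟨a, b, hab, hnone⟩ := exists_adj_none_iff_of_degree_none_eq_two hdeg_none
    have ha : a ∈ ({u, v, w} : Set V) := by simpa using hnbr _ ((hnone _).mpr (.inl rfl))
    have hb : b ∈ ({u, v, w} : Set V) := by simpa using hnbr _ ((hnone _).mpr (.inr rfl))
    have hS' := forall_mem_triangle_not_adj (G'.comap some) huv' huw' hvw'
    have hsub := isEdgeSubdivision_comap_sup_edge hab (hS' a ha b hb) hnone
    refine ⟨_, inferInstance, fun y => (hsub.degree_some y).symm.trans (hdeg y), ?_,
      (ite_adj_triangle_eq_one_iff _ huv huw hvw).mpr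
        ⟨a, ha, b, hb, hab, fun p hp q hq => hsub.not_adj_some_iff.mp (hS' p hp q hq)⟩⟩
    intro e
    refine Sym2.ind (fun p q he hpq => ?_) e
    rcases (hsub.adj_iff p q).mp hpq with h | h
    · exact hF p q he h
    · rw [h] at he
      exact (hFS a b he).elim (· ha) (· hb)

/-- The gadget replacing the cut constraint `(S, d(S) - 2)` for `S = {u, v, w}` of size 3.
There is a simple graph `G` on `V` realizing `d`, avoiding all forbidden pairs of `F`, and
having exactly one edge with both endpoints in `S`, if and only if there is a simple graph
`G'` on `V ∪ {x}` (modeled as `Option V`, the new vertex `x` being `none`) realizing `d`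
on `V`, where `x` has degree `2`, all neighbors of `x` lie in `S`, no edge of `G'` has
both endpoints in `S`, and `G'` avoids all forbidden pairs of `F`. -/
theorem size_three_cut_gadget_one_edge {V : Type*} [Fintype V] [DecidableEq V]
    (d : V → ℕ) (u v w : V) (huv : u ≠ v) (huw : u ≠ w) (hvw : v ≠ w)
    (F : Set (Sym2 V)) (hFdiag : ∀ e ∈ F, ¬ e.IsDiag)
    (hFS : ∀ a b : V, s(a, b) ∈ F → a ∉ ({u, v, w} : Set V) ∨ b ∉ ({u, v, w} : Set V)) :
    (∃ (G : SimpleGraph V) (_ : DecidableRel G.Adj),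
        (∀ y, G.degree y = d y) ∧ (∀ e ∈ F, e ∉ G.edgeSet) ∧
          (if G.Adj u v then 1 else 0) + (if G.Adj u w then 1 else 0) +
            (if G.Adj v w then 1 else 0) = 1) ↔
      (∃ (G' : SimpleGraph (Option V)) (_ : DecidableRel G'.Adj),
        (∀ y : V, G'.degree (some y) = d y) ∧ G'.degree none = 2 ∧
          (∀ z, G'.Adj none z → z = some u ∨ z = some v ∨ z = some w) ∧
          ¬ G'.Adj (some u) (some v) ∧ ¬ G'.Adj (some u) (some w) ∧
            ¬ G'.Adj (some v) (some w) ∧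
          (∀ a b : V, s(a, b) ∈ F → ¬ G'.Adj (some a) (some b))) :=
  size_three_cut_gadget_one_edge_general d u v w huv huw hvw F hFS
end

section
/- Let V be a finite set, d : V → ℕ, let u, v, w ∈ V be pairwise distinct with S = {u, v, w}, let x, y ∉ V be two distinct new elements, and let F be a set of unordered pairs of distinct elements of V containing no pair with both elements in S. Then there exists a simple graph G on V with deg_G(z) = d(z) for all z ∈ V, with no edge of G in F, and with exactly two edges of G having both endpoints in S, if and only if there exists a simple graph G' on V ∪ {x, y} with deg_{G'}(z) = d(z) for all z ∈ V, deg_{G'}(x) = 3, deg_{G'}(y) = 1, the neighbors of x in G' being exactly u, v, w, the unique neighbor of y in G' belonging to S, no edge of G' having both endpoints in S, and no edge of G' in F. -/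
/-!
Exactly two of the three pairs in `S` are edges iff they form a path `b – a – c` through an apex
`a ∈ S`. Deleting the edges `ab`, `ac` and joining `x` to `a, b, c` and `y` to `a` changes no
degree on `V` (`a` loses two edges and gains two, `b` and `c` lose one and gain one each) and
leaves no edge inside `S`. Conversely the neighbour `a` of `y` is such an apex: replacing `x` and
`y` by the edges `ab`, `ac`, which are not forbidden since `F` has no pair inside `S`, restores
the degrees.
-/

namespace SimpleGraph

variable {V α β : Type*}

lemma degree_eq_ncard_neighborSet [Fintype V] (G : SimpleGraph V) [DecidableRel G.Adj] (v : V) :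
    G.degree v = (G.neighborSet v).ncard := by
  rw [← card_neighborSet_eq_degree, ← Nat.card_eq_fintype_card, Nat.card_coe_set_eq]

lemma ncard_neighborSet_of_edgeSet_eq_union [Finite V] {G H : SimpleGraph V} {E : Set (Sym2 V)}
    (hGH : G.edgeSet = H.edgeSet ∪ E) (hHE : Disjoint H.edgeSet E) (v : V) :
    (G.neighborSet v).ncard = (H.neighborSet v).ncard + {t | s(v, t) ∈ E}.ncard := by
  have hsplit : G.neighborSet v = H.neighborSet v ∪ {t | s(v, t) ∈ E} := by
    ext t
    simp only [mem_neighborSet, ← mem_edgeSet, hGH, Set.mem_union, Set.mem_ofPred_eq]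
  rw [hsplit, Set.ncard_union_eq]
  exact Set.disjoint_left.2 fun t ht ht' => hHE.notMem_of_mem_left ((H.mem_edgeSet).2 ht) ht'

lemma ncard_neighborSet_inl [Finite α] [Finite β] (K : SimpleGraph (α ⊕ β)) (a : α) :
    (K.neighborSet (.inl a)).ncard =
      ((K.comap Sum.inl).neighborSet a).ncard + {b | K.Adj (.inl a) (.inr b)}.ncard := by
  have hsplit : K.neighborSet (.inl a) =
      Sum.inl '' (K.comap Sum.inl).neighborSet a ∪ Sum.inr '' {b | K.Adj (.inl a) (.inr b)} := by
    ext (t | t) <;> simp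
  rw [hsplit, Set.ncard_union_eq, Set.ncard_image_of_injective _ Sum.inl_injective,
    Set.ncard_image_of_injective _ Sum.inr_injective]
  exact Set.disjoint_left.2 (by simp)

def attachVertices (H : SimpleGraph α) (r : α → β → Prop) : SimpleGraph (α ⊕ β) where
  Adj
    | .inl a, .inl a' => H.Adj a a'
    | .inl a, .inr b | .inr b, .inl a => r a b
    | .inr _, .inr _ => False
  symm := ⟨by rintro (a | b) (a' | b') h <;> first | exact h.symm | exact h⟩
  loopless := ⟨by rintro (a | b) h; exacts [H.loopless.irrefl a h, h]⟩

variable {H : SimpleGraph α} {r : α → β → Prop}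

@[simp] lemma attachVertices_adj_inl_inl {a a' : α} :
    (H.attachVertices r).Adj (.inl a) (.inl a') ↔ H.Adj a a' := Iff.rfl

@[simp] lemma attachVertices_adj_inr_inl {a : α} {b : β} :
    (H.attachVertices r).Adj (.inr b) (.inl a) ↔ r a b := Iff.rfl

@[simp] lemma not_attachVertices_adj_inr_inr {b b' : β} :
    ¬ (H.attachVertices r).Adj (.inr b) (.inr b') := id

@[simp] lemma comap_inl_attachVertices : (H.attachVertices r).comap Sum.inl = H := rfl

lemma neighborSet_attachVertices_inr (b : β) :
    (H.attachVertices r).neighborSet (.inr b) = Sum.inl '' {a | r a b} := by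
  ext (a | b') <;> simp

lemma adj_iff_eq_of_degree_eq_one [Fintype V] {G : SimpleGraph V} [DecidableRel G.Adj] {v w : V}
    (hv : G.degree v = 1) (hvw : G.Adj v w) (w' : V) : G.Adj v w' ↔ w' = w := by
  obtain ⟨x, -, hx⟩ := degree_eq_one_iff_existsUnique_adj.1 hv
  exact ⟨fun h => (hx w' h).trans (hx w hvw).symm, fun h => h ▸ hvw⟩

end SimpleGraph

open SimpleGraph

lemma ite_add_ite_add_ite_eq_two {p q r : Prop} [Decidable p] [Decidable q] [Decidable r] :
    (if p then 1 else 0) + (if q then 1 else 0) + (if r then 1 else 0) = 2 ↔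
      p ∧ q ∧ ¬ r ∨ p ∧ ¬ q ∧ r ∨ ¬ p ∧ q ∧ r := by
  by_cases p <;> by_cases q <;> by_cases r <;> simp [*]

section Gadget

variable {V : Type*}

def gadgetRel (a b c : V) : V → Fin 2 → Prop
  | z, 0 => z = a ∨ z = b ∨ z = c
  | z, 1 => z = a

variable {a b c : V}

lemma ncard_gadgetRel (hab : a ≠ b) (hac : a ≠ c) (hbc : b ≠ c) (z : V) :
    {i | gadgetRel a b c z i}.ncard =
      {t | s(z, t) ∈ ({s(a, b), s(a, c)} : Set (Sym2 V))}.ncard := by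
  by_cases hza : z = a
  · have h1 : {i | gadgetRel a b c z i} = Set.univ := by
      ext i; fin_cases i <;> simp [gadgetRel, hza]
    have h2 : {t | s(z, t) ∈ ({s(a, b), s(a, c)} : Set (Sym2 V))} = {b, c} := by
      ext t; simp [hza, hab, hac]
    rw [h1, h2, Set.ncard_univ, Nat.card_eq_fintype_card, Fintype.card_fin, Set.ncard_pair hbc]
  by_cases hzbc : z = b ∨ z = c
  · have h1 : {i | gadgetRel a b c z i} = {0} := by
      ext i; fin_cases i <;> simp [gadgetRel, hza, hzbc]
    have h2 : {t | s(z, t) ∈ ({s(a, b), s(a, c)} : Set (Sym2 V))} = {a} := by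
      ext t; rcases hzbc with rfl | rfl <;> simp [hza, hbc, hbc.symm]
    rw [h1, h2, Set.ncard_singleton, Set.ncard_singleton]
  · have h1 : {i | gadgetRel a b c z i} = ∅ := by
      ext i; fin_cases i <;> simp [gadgetRel, hza, hzbc]
    have h2 : {t | s(z, t) ∈ ({s(a, b), s(a, c)} : Set (Sym2 V))} = ∅ := by
      ext t; simp_all
    rw [h1, h2, Set.ncard_empty, Set.ncard_empty]

lemma degree_inl_eq_of_gadget [Fintype V] (hab : a ≠ b) (hac : a ≠ c) (hbc : b ≠ c)
    {G : SimpleGraph V} [DecidableRel G.Adj] {G' : SimpleGraph (V ⊕ Fin 2)} [DecidableRel G'.Adj]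
    (hedges : G.edgeSet = (G'.comap Sum.inl).edgeSet ∪ {s(a, b), s(a, c)})
    (hdisj : Disjoint (G'.comap Sum.inl).edgeSet {s(a, b), s(a, c)})
    (hnew : ∀ z i, G'.Adj (.inl z) (.inr i) ↔ gadgetRel a b c z i) (z : V) :
    G'.degree (.inl z) = G.degree z := by
  rw [degree_eq_ncard_neighborSet, degree_eq_ncard_neighborSet, ncard_neighborSet_inl,
    ncard_neighborSet_of_edgeSet_eq_union hedges hdisj, ← ncard_gadgetRel hab hac hbc]
  simp only [hnew]

variable [Fintype V] (d : V → ℕ) (F : Set (Sym2 V))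

def IsGadgetRealization (u v w : V) (G' : SimpleGraph (V ⊕ Fin 2)) [DecidableRel G'.Adj] : Prop :=
  (∀ z : V, G'.degree (Sum.inl z) = d z) ∧
    G'.degree (Sum.inr 0) = 3 ∧ G'.degree (Sum.inr 1) = 1 ∧
    (∀ z, G'.Adj (Sum.inr 0) z ↔ z = Sum.inl u ∨ z = Sum.inl v ∨ z = Sum.inl w) ∧
    (∀ z, G'.Adj (Sum.inr 1) z → z = Sum.inl u ∨ z = Sum.inl v ∨ z = Sum.inl w) ∧
    ¬ G'.Adj (Sum.inl u) (Sum.inl v) ∧ ¬ G'.Adj (Sum.inl u) (Sum.inl w) ∧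
      ¬ G'.Adj (Sum.inl v) (Sum.inl w) ∧
    (∀ a b : V, s(a, b) ∈ F → ¬ G'.Adj (Sum.inl a) (Sum.inl b))

variable {d F} {u v w : V} {G' : SimpleGraph (V ⊕ Fin 2)} [DecidableRel G'.Adj]

lemma IsGadgetRealization.swap_left (h : IsGadgetRealization d F u v w G') :
    IsGadgetRealization d F v u w G' := by
  obtain ⟨hdeg, hx3, hy1, hx, hy, huv, huw, hvw, hF⟩ := h
  exact ⟨hdeg, hx3, hy1, fun z => (hx z).trans or_left_comm, fun z hz => or_left_comm.1 (hy z hz),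
    fun h => huv h.symm, hvw, huw, hF⟩

lemma IsGadgetRealization.swap_right (h : IsGadgetRealization d F u v w G') :
    IsGadgetRealization d F u w v G' := by
  obtain ⟨hdeg, hx3, hy1, hx, hy, huv, huw, hvw, hF⟩ := h
  exact ⟨hdeg, hx3, hy1, fun z => (hx z).trans (or_congr_right or_comm),
    fun z hz => (or_congr_right or_comm).1 (hy z hz), huw, huv, fun h => hvw h.symm, hF⟩

variable (d F) in
theorem exists_isGadgetRealization_of_apex (hab : a ≠ b) (hac : a ≠ c) (hbc : b ≠ c)
    (G : SimpleGraph V) [DecidableRel G.Adj] (hdeg : ∀ z, G.degree z = d z)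
    (hF : ∀ e ∈ F, e ∉ G.edgeSet) (h_ab : G.Adj a b) (h_ac : G.Adj a c) (h_bc : ¬ G.Adj b c) :
    ∃ (G' : SimpleGraph (V ⊕ Fin 2)) (_ : DecidableRel G'.Adj),
      IsGadgetRealization d F a b c G' := by
  classical
  let P : Set (Sym2 V) := {s(a, b), s(a, c)}
  let G' := (G.deleteEdges P).attachVertices (gadgetRel a b c)
  have hedges : G.edgeSet = (G'.comap Sum.inl).edgeSet ∪ P := by
    rw [comap_inl_attachVertices, edgeSet_deleteEdges, Set.sdiff_union_of_subset]
    exact Set.insert_subset_iff.2 ⟨h_ab, Set.singleton_subset_iff.2 h_ac⟩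
  have hdisj : Disjoint (G'.comap Sum.inl).edgeSet P := by
    rw [comap_inl_attachVertices, edgeSet_deleteEdges]
    exact Set.disjoint_sdiff_left
  refine ⟨G', inferInstance, fun z => ?_, ?_, ?_, ?_, ?_, ?_, ?_, ?_, ?_⟩
  · rw [degree_inl_eq_of_gadget hab hac hbc hedges hdisj (fun _ _ => Iff.rfl), hdeg]
  · rw [degree_eq_ncard_neighborSet, neighborSet_attachVertices_inr,
      Set.ncard_image_of_injective _ Sum.inl_injective]
    exact Set.ncard_eq_three.2 ⟨a, b, c, hab, hac, hbc, rfl⟩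
  · rw [degree_eq_ncard_neighborSet, neighborSet_attachVertices_inr,
      Set.ncard_image_of_injective _ Sum.inl_injective]
    exact Set.ncard_singleton a
  · rintro (z | i) <;> simp [G', gadgetRel]
  · rintro (z | i) h
    · exact .inl (congrArg _ h)
    · exact h.elim
  · simp [G', P]
  · simp [G', P]
  · simp [G', h_bc]
  · intro s t hst hadj
    exact hF _ hst (deleteEdges_le P hadj)

theorem exists_apex_of_isGadgetRealization (hab : a ≠ b) (hac : a ≠ c) (hbc : b ≠ c)
    (hF_ab : s(a, b) ∉ F) (hF_ac : s(a, c) ∉ F) (hG' : IsGadgetRealization d F a b c G')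
    (hya : G'.Adj (.inr 1) (.inl a)) :
    ∃ (G : SimpleGraph V) (_ : DecidableRel G.Adj), (∀ z, G.degree z = d z) ∧
      (∀ e ∈ F, e ∉ G.edgeSet) ∧ G.Adj a b ∧ G.Adj a c ∧ ¬ G.Adj b c := by
  classical
  obtain ⟨hdeg, -, hy1, hx, -, h_ab, h_ac, h_bc, hF⟩ := hG'
  let P : Set (Sym2 V) := {s(a, b), s(a, c)}
  let H := G'.comap Sum.inl
  let G := H ⊔ fromEdgeSet P
  have hedges : G.edgeSet = H.edgeSet ∪ P := by
    rw [edgeSet_sup, edgeSet_fromEdgeSet, sdiff_eq_left.2]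
    simp [P, Set.disjoint_left, hab, hac]
  have hdisj : Disjoint H.edgeSet P := by
    refine Set.disjoint_right.2 ?_
    rintro _ (rfl | rfl)
    exacts [h_ab, h_ac]
  have hnew : ∀ z i, G'.Adj (.inl z) (.inr i) ↔ gadgetRel a b c z i := by
    refine fun z => Fin.forall_fin_two.2 ⟨?_, ?_⟩
    · rw [G'.adj_comm, hx]
      simp [gadgetRel]
    · rw [G'.adj_comm, adj_iff_eq_of_degree_eq_one hy1 hya]
      simp [gadgetRel]
  refine ⟨G, inferInstance, fun z => ?_, fun e he hG => ?_, ?_, ?_, ?_⟩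
  · rw [← degree_inl_eq_of_gadget hab hac hbc hedges hdisj hnew, hdeg]
  · rw [hedges] at hG
    rcases hG with hH | rfl | rfl
    · induction e using Sym2.ind with
      | _ s t => exact hF s t he hH
    exacts [hF_ab he, hF_ac he]
  · simp [G, P, hab]
  · simp [G, P, hac]
  · simp [G, H, P, h_bc, hab.symm, hac.symm]

end Gadget

theorem size_three_cut_gadget_two_edges_general {V : Type*} [Fintype V]
    (d : V → ℕ) (u v w : V) (huv : u ≠ v) (huw : u ≠ w) (hvw : v ≠ w)
    (F : Set (Sym2 V))
    (hFS : ∀ a b : V, s(a, b) ∈ F → a ∉ ({u, v, w} : Set V) ∨ b ∉ ({u, v, w} : Set V)) :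
    (∃ (G : SimpleGraph V) (_ : DecidableRel G.Adj),
        (∀ z, G.degree z = d z) ∧ (∀ e ∈ F, e ∉ G.edgeSet) ∧
          (if G.Adj u v then 1 else 0) + (if G.Adj u w then 1 else 0) +
            (if G.Adj v w then 1 else 0) = 2) ↔
      (∃ (G' : SimpleGraph (V ⊕ Fin 2)) (_ : DecidableRel G'.Adj),
        (∀ z : V, G'.degree (Sum.inl z) = d z) ∧
          G'.degree (Sum.inr 0) = 3 ∧ G'.degree (Sum.inr 1) = 1 ∧
          (∀ z, G'.Adj (Sum.inr 0) z ↔ z = Sum.inl u ∨ z = Sum.inl v ∨ z = Sum.inl w) ∧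
          (∀ z, G'.Adj (Sum.inr 1) z → z = Sum.inl u ∨ z = Sum.inl v ∨ z = Sum.inl w) ∧
          ¬ G'.Adj (Sum.inl u) (Sum.inl v) ∧ ¬ G'.Adj (Sum.inl u) (Sum.inl w) ∧
            ¬ G'.Adj (Sum.inl v) (Sum.inl w) ∧
          (∀ a b : V, s(a, b) ∈ F → ¬ G'.Adj (Sum.inl a) (Sum.inl b))) := by
  constructor
  · rintro ⟨G, _, hdeg, hF, htwo⟩
    rcases ite_add_ite_add_ite_eq_two.1 htwo with ⟨h_uv, h_uw, h_vw⟩ | ⟨h_uv, h_uw, h_vw⟩ |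
      ⟨h_uv, h_uw, h_vw⟩
    · exact exists_isGadgetRealization_of_apex d F huv huw hvw G hdeg hF h_uv h_uw h_vw
    · obtain ⟨G', _, hG'⟩ := exists_isGadgetRealization_of_apex d F huv.symm hvw huw G hdeg hF
        h_uv.symm h_vw h_uw
      exact ⟨G', _, hG'.swap_left⟩
    · obtain ⟨G', _, hG'⟩ := exists_isGadgetRealization_of_apex d F huw.symm hvw.symm huv G hdeg
        hF h_uw.symm h_vw.symm h_uv
      exact ⟨G', _, hG'.swap_left.swap_right⟩
  · rintro ⟨G', _, hG' : IsGadgetRealization d F u v w G'⟩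
    have hF_S : ∀ a b, a ∈ ({u, v, w} : Set V) → b ∈ ({u, v, w} : Set V) → s(a, b) ∉ F :=
      fun a b ha hb hab => (hFS a b hab).elim (· ha) (· hb)
    obtain ⟨-, -, hy1, -, hyS, -⟩ := id hG'
    obtain ⟨y, hy⟩ := (degree_eq_one_iff_existsUnique_adj.1 hy1).exists
    rcases hyS y hy with rfl | rfl | rfl
    · obtain ⟨G, _, hdeg, hF, h_uv, h_uw, h_vw⟩ := exists_apex_of_isGadgetRealization huv huw hvw
        (hF_S u v (by simp) (by simp)) (hF_S u w (by simp) (by simp)) hG' hy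
      exact ⟨G, _, hdeg, hF, ite_add_ite_add_ite_eq_two.2 (.inl ⟨h_uv, h_uw, h_vw⟩)⟩
    · obtain ⟨G, _, hdeg, hF, h_vu, h_vw, h_uw⟩ := exists_apex_of_isGadgetRealization huv.symm
        hvw huw (hF_S v u (by simp) (by simp)) (hF_S v w (by simp) (by simp)) hG'.swap_left hy
      exact ⟨G, _, hdeg, hF, ite_add_ite_add_ite_eq_two.2 (.inr (.inl ⟨h_vu.symm, h_uw, h_vw⟩))⟩
    · obtain ⟨G, _, hdeg, hF, h_wu, h_wv, h_uv⟩ := exists_apex_of_isGadgetRealization huw.symm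
        hvw.symm huv (hF_S w u (by simp) (by simp)) (hF_S w v (by simp) (by simp))
        hG'.swap_right.swap_left hy
      exact ⟨G, _, hdeg, hF,
        ite_add_ite_add_ite_eq_two.2 (.inr (.inr ⟨h_uv, h_wu.symm, h_wv.symm⟩))⟩

/-- The gadget replacing the cut constraint `(S, d(S) - 4)` for `S = {u, v, w}` of size 3.
There is a simple graph `G` on `V` realizing `d`, avoiding all forbidden pairs of `F`, and
having exactly two edges with both endpoints in `S`, if and only if there is a simple
graph `G'` on `V ∪ {x, y}` (modeled as `V ⊕ Fin 2`, with `x = Sum.inr 0` and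
`y = Sum.inr 1`) realizing `d` on `V`, where `x` has degree `3` with neighbors exactly
`u, v, w`, `y` has degree `1` with its unique neighbor in `S`, no edge of `G'` has both
endpoints in `S`, and `G'` avoids all forbidden pairs of `F`. -/
theorem size_three_cut_gadget_two_edges {V : Type*} [Fintype V] [DecidableEq V]
    (d : V → ℕ) (u v w : V) (huv : u ≠ v) (huw : u ≠ w) (hvw : v ≠ w)
    (F : Set (Sym2 V)) (hFdiag : ∀ e ∈ F, ¬ e.IsDiag)
    (hFS : ∀ a b : V, s(a, b) ∈ F → a ∉ ({u, v, w} : Set V) ∨ b ∉ ({u, v, w} : Set V)) :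
    (∃ (G : SimpleGraph V) (_ : DecidableRel G.Adj),
        (∀ z, G.degree z = d z) ∧ (∀ e ∈ F, e ∉ G.edgeSet) ∧
          (if G.Adj u v then 1 else 0) + (if G.Adj u w then 1 else 0) +
            (if G.Adj v w then 1 else 0) = 2) ↔
      (∃ (G' : SimpleGraph (V ⊕ Fin 2)) (_ : DecidableRel G'.Adj),
        (∀ z : V, G'.degree (Sum.inl z) = d z) ∧
          G'.degree (Sum.inr 0) = 3 ∧ G'.degree (Sum.inr 1) = 1 ∧
          (∀ z, G'.Adj (Sum.inr 0) z ↔ z = Sum.inl u ∨ z = Sum.inl v ∨ z = Sum.inl w) ∧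
          (∀ z, G'.Adj (Sum.inr 1) z → z = Sum.inl u ∨ z = Sum.inl v ∨ z = Sum.inl w) ∧
          ¬ G'.Adj (Sum.inl u) (Sum.inl v) ∧ ¬ G'.Adj (Sum.inl u) (Sum.inl w) ∧
            ¬ G'.Adj (Sum.inl v) (Sum.inl w) ∧
          (∀ a b : V, s(a, b) ∈ F → ¬ G'.Adj (Sum.inl a) (Sum.inl b))) :=
  size_three_cut_gadget_two_edges_general d u v w huv huw hvw F hFS
end

section
/- Let t ≥ 1 and let σ : Fin t → Bool be a truth assignment to variables x_0, ..., x_{t−1}. For each i, consider the two-literal clause (x_i ∨ ¬x_{i+1 mod t}). Then σ makes exactly one literal true in every one of these t clauses if and only if σ is constant, i.e., σ(i) = σ(j) for all i, j. -/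
/-!
Under `σ` the clause `x_i ∨ ¬x_{i+1}` has exactly one true literal precisely when
`σ i = σ (i + 1)`. So the clauses hold iff `σ` is invariant under the cyclic shift, and already the
non-wrapping steps `i ↦ i + 1` connect every index to `0`.
-/

theorem Bool.xor_eq_true_eq_false_iff_eq (a b : Bool) : Xor (a = true) (b = false) ↔ a = b := by
  rw [xor_iff_iff_not, Bool.not_eq_false]
  exact Bool.coe_iff_coe

theorem Fin.apply_eq_apply_zero_of_succ {n : ℕ} {α : Type*} {f : Fin (n + 1) → α}
    (h : ∀ i : Fin n, f i.succ = f i.castSucc) (j : Fin (n + 1)) : f j = f 0 := by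
  induction j using Fin.induction with
  | zero => rfl
  | succ i ih => rw [h, ih]

/-- The cyclic equivalence gadget for `(2,1)`-1-in-3-SAT.  Let `t ≥ 1` (here `t + 1` with
`t : ℕ` arbitrary) and let `σ` be a truth assignment to the variables `x_0, …, x_t`.
For each index `i`, consider the two-literal clause `(x_i ∨ ¬x_{i+1 mod (t+1)})`.
Then `σ` makes exactly one literal true in every one of these clauses if and only if `σ`
is constant. -/
theorem cyclic_clauses_one_in_three_iff_constant (t : ℕ) (σ : Fin (t + 1) → Bool) :
    (∀ i : Fin (t + 1), Xor' (σ i = true) (σ (i + 1) = false)) ↔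
      ∀ i j : Fin (t + 1), σ i = σ j := by
  constructor
  · intro h i j
    have step : ∀ i : Fin t, σ i.succ = σ i.castSucc := fun i => by
      rw [← Fin.coeSucc_eq_succ]
      exact ((Bool.xor_eq_true_eq_false_iff_eq _ _).1 (h i.castSucc)).symm
    rw [Fin.apply_eq_apply_zero_of_succ step i, Fin.apply_eq_apply_zero_of_succ step j]
  · exact fun h i => (Bool.xor_eq_true_eq_false_iff_eq _ _).2 (h i (i + 1))
end

section
/- Let G be a simple graph on a finite vertex set V and let t₁, t₂, f₁, f₂ ∈ V be pairwise distinct vertices, each of degree 1 in G, with X = {t₁, t₂, f₁, f₂}. Suppose every edge of G with both endpoints in X is equal to t₁t₂ or to f₁f₂, and suppose |∂(X)| = 2. Then exactly one of the following holds: (i) f₁f₂ is an edge of G and the unique neighbors of t₁ and of t₂ both lie outside X; or (ii) t₁t₂ is an edge of G and the unique neighbors of f₁ and of f₂ both lie outside X. -/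
open Finset

variable {V : Type*}

/-- The size of the edge cut `∂(S)`: the number of edges of `G` with exactly one endpoint
in `S`. -/
def edgeCutSize [Fintype V] [DecidableEq V] (G : SimpleGraph V) [DecidableRel G.Adj]
    (S : Finset V) : ℕ :=
  ((S ×ˢ Sᶜ).filter fun p => G.Adj p.1 p.2).card

lemma edgeCutSize_eq_sum [Fintype V] [DecidableEq V] (G : SimpleGraph V) [DecidableRel G.Adj]
    (S : Finset V) : edgeCutSize G S = ∑ v ∈ S, (Sᶜ.filter (G.Adj v)).card := by
  unfold edgeCutSize
  rw [Finset.card_filter, Finset.sum_product]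
  exact Finset.sum_congr rfl fun v _ => (Finset.card_filter _ _).symm

lemma cnt_eq [Fintype V] [DecidableEq V] (G : SimpleGraph V) [DecidableRel G.Adj]
    (S : Finset V) (v z : V) (hvz : G.neighborFinset v = {z}) :
    (Sᶜ.filter (G.Adj v)).card = if z ∈ S then 0 else 1 := by
  have hw : ∀ w, G.Adj v w ↔ w = z := by
    intro w
    rw [← SimpleGraph.mem_neighborFinset, hvz, Finset.mem_singleton]
  have : Sᶜ.filter (G.Adj v) = if z ∈ S then ∅ else {z} := by
    split_ifs with h <;> ext w <;> simp only [Finset.mem_filter, Finset.mem_compl, hw,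
      Finset.notMem_empty, Finset.mem_singleton, iff_false]
    · rintro ⟨hws, rfl⟩; exact hws h
    · constructor
      · rintro ⟨_, rfl⟩; rfl
      · rintro rfl; exact ⟨h, rfl⟩
  rw [this]
  split_ifs <;> simp


/-- The variable gadget of the NP-hardness reduction.  Let `t₁, t₂, f₁, f₂` be pairwise
distinct vertices of degree `1` with `X = {t₁, t₂, f₁, f₂}`, suppose every edge of `G`
inside `X` equals `t₁t₂` or `f₁f₂`, and suppose `|∂(X)| = 2`.  Then exactly one of the
following holds: (i) `f₁f₂` is an edge and the unique neighbors of `t₁` and `t₂` lie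
outside `X`; or (ii) `t₁t₂` is an edge and the unique neighbors of `f₁` and `f₂` lie
outside `X`. -/
theorem variable_gadget [Fintype V] [DecidableEq V]
    (G : SimpleGraph V) [DecidableRel G.Adj] (t₁ t₂ f₁ f₂ : V)
    (h₁₂ : t₁ ≠ t₂) (h₁₃ : t₁ ≠ f₁) (h₁₄ : t₁ ≠ f₂)
    (h₂₃ : t₂ ≠ f₁) (h₂₄ : t₂ ≠ f₂) (h₃₄ : f₁ ≠ f₂)
    (hdt₁ : G.degree t₁ = 1) (hdt₂ : G.degree t₂ = 1)
    (hdf₁ : G.degree f₁ = 1) (hdf₂ : G.degree f₂ = 1)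
    (hX : ∀ a b : V, a ∈ ({t₁, t₂, f₁, f₂} : Finset V) → b ∈ ({t₁, t₂, f₁, f₂} : Finset V) →
      G.Adj a b → s(a, b) = s(t₁, t₂) ∨ s(a, b) = s(f₁, f₂))
    (hcut : edgeCutSize G {t₁, t₂, f₁, f₂} = 2) :
    Xor'
      (G.Adj f₁ f₂ ∧ (∀ z, G.Adj t₁ z → z ∉ ({t₁, t₂, f₁, f₂} : Finset V)) ∧
        ∀ z, G.Adj t₂ z → z ∉ ({t₁, t₂, f₁, f₂} : Finset V))
      (G.Adj t₁ t₂ ∧ (∀ z, G.Adj f₁ z → z ∉ ({t₁, t₂, f₁, f₂} : Finset V)) ∧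
        ∀ z, G.Adj f₂ z → z ∉ ({t₁, t₂, f₁, f₂} : Finset V)) := by
  set X : Finset V := {t₁, t₂, f₁, f₂} with hXdef
  obtain ⟨z₁, hz₁⟩ : ∃ z, G.neighborFinset t₁ = {z} :=
    Finset.card_eq_one.mp (by rw [← SimpleGraph.card_neighborFinset_eq_degree] at hdt₁; exact hdt₁)
  obtain ⟨z₂, hz₂⟩ : ∃ z, G.neighborFinset t₂ = {z} :=
    Finset.card_eq_one.mp (by rw [← SimpleGraph.card_neighborFinset_eq_degree] at hdt₂; exact hdt₂)
  obtain ⟨z₃, hz₃⟩ : ∃ z, G.neighborFinset f₁ = {z} :=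
    Finset.card_eq_one.mp (by rw [← SimpleGraph.card_neighborFinset_eq_degree] at hdf₁; exact hdf₁)
  obtain ⟨z₄, hz₄⟩ : ∃ z, G.neighborFinset f₂ = {z} :=
    Finset.card_eq_one.mp (by rw [← SimpleGraph.card_neighborFinset_eq_degree] at hdf₂; exact hdf₂)
  have ha₁ : ∀ w, G.Adj t₁ w ↔ w = z₁ := fun w => by
    rw [← SimpleGraph.mem_neighborFinset, hz₁, Finset.mem_singleton]
  have ha₂ : ∀ w, G.Adj t₂ w ↔ w = z₂ := fun w => by
    rw [← SimpleGraph.mem_neighborFinset, hz₂, Finset.mem_singleton]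
  have ha₃ : ∀ w, G.Adj f₁ w ↔ w = z₃ := fun w => by
    rw [← SimpleGraph.mem_neighborFinset, hz₃, Finset.mem_singleton]
  have ha₄ : ∀ w, G.Adj f₂ w ↔ w = z₄ := fun w => by
    rw [← SimpleGraph.mem_neighborFinset, hz₄, Finset.mem_singleton]
  -- if the unique neighbor is in X, identify it
  have hn₁ : z₁ ∈ X → z₁ = t₂ := by
    intro h
    rcases hX t₁ z₁ (by simp [hXdef]) h ((ha₁ z₁).mpr rfl) with h' | h'
    · rcases Sym2.eq_iff.mp h' with ⟨h1, h2⟩ | ⟨h1, h2⟩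
      · exact h2
      · exact absurd h1 h₁₂
    · rcases Sym2.eq_iff.mp h' with ⟨h1, h2⟩ | ⟨h1, h2⟩
      · exact absurd h1 h₁₃
      · exact absurd h1 h₁₄
  have hn₂ : z₂ ∈ X → z₂ = t₁ := by
    intro h
    rcases hX t₂ z₂ (by simp [hXdef]) h ((ha₂ z₂).mpr rfl) with h' | h'
    · rcases Sym2.eq_iff.mp h' with ⟨h1, h2⟩ | ⟨h1, h2⟩
      · exact absurd h1.symm h₁₂
      · exact h2
    · rcases Sym2.eq_iff.mp h' with ⟨h1, h2⟩ | ⟨h1, h2⟩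
      · exact absurd h1 h₂₃
      · exact absurd h1 h₂₄
  have hn₃ : z₃ ∈ X → z₃ = f₂ := by
    intro h
    rcases hX f₁ z₃ (by simp [hXdef]) h ((ha₃ z₃).mpr rfl) with h' | h'
    · rcases Sym2.eq_iff.mp h' with ⟨h1, h2⟩ | ⟨h1, h2⟩
      · exact absurd h1.symm h₁₃
      · exact absurd h1.symm h₂₃
    · rcases Sym2.eq_iff.mp h' with ⟨h1, h2⟩ | ⟨h1, h2⟩
      · exact h2
      · exact absurd h1 h₃₄
  have hn₄ : z₄ ∈ X → z₄ = f₁ := by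
    intro h
    rcases hX f₂ z₄ (by simp [hXdef]) h ((ha₄ z₄).mpr rfl) with h' | h'
    · rcases Sym2.eq_iff.mp h' with ⟨h1, h2⟩ | ⟨h1, h2⟩
      · exact absurd h1.symm h₁₄
      · exact absurd h1.symm h₂₄
    · rcases Sym2.eq_iff.mp h' with ⟨h1, h2⟩ | ⟨h1, h2⟩
      · exact absurd h1.symm h₃₄
      · exact h2
  -- cut as a sum of four terms
  have hsum : edgeCutSize G X =
      (if z₁ ∈ X then 0 else 1) + ((if z₂ ∈ X then 0 else 1) +
        ((if z₃ ∈ X then 0 else 1) + (if z₄ ∈ X then 0 else 1))) := by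
    rw [edgeCutSize_eq_sum, hXdef]
    rw [Finset.sum_insert (by simp [h₁₂, h₁₃, h₁₄]),
        Finset.sum_insert (by simp [h₂₃, h₂₄]),
        Finset.sum_insert (by simp [h₃₄]), Finset.sum_singleton,
        cnt_eq G _ t₁ z₁ hz₁, cnt_eq G _ t₂ z₂ hz₂,
        cnt_eq G _ f₁ z₃ hz₃, cnt_eq G _ f₂ z₄ hz₄]
  rw [hsum] at hcut
  by_cases hb₁ : z₁ ∈ X
  · -- t₁'s neighbor inside: edge t₁t₂, so f's neighbors outside
    have e₁ : z₁ = t₂ := hn₁ hb₁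
    have hadj : G.Adj t₁ t₂ := (ha₁ t₂).mpr e₁.symm
    have e₂ : z₂ = t₁ := ((ha₂ t₁).mp hadj.symm).symm
    have hb₂ : z₂ ∈ X := by rw [e₂]; simp [hXdef]
    have hb₃ : z₃ ∉ X := by
      intro h
      rw [if_pos hb₁, if_pos hb₂, if_pos h] at hcut
      split_ifs at hcut <;> omega
    have hb₄ : z₄ ∉ X := by
      intro h
      rw [if_pos hb₁, if_pos hb₂, if_pos h] at hcut
      split_ifs at hcut <;> omega
    refine Or.inr ⟨⟨hadj, fun z hz => ?_, fun z hz => ?_⟩, fun hA => ?_⟩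
    · rw [(ha₃ z).mp hz]; exact hb₃
    · rw [(ha₄ z).mp hz]; exact hb₄
    · have h' : f₂ = z₃ := (ha₃ f₂).mp hA.1
      exact hb₃ (h' ▸ (show f₂ ∈ X by simp [hXdef]))
  · have hb₂ : z₂ ∉ X := by
      intro h
      have e₂ : z₂ = t₁ := hn₂ h
      have : z₁ = t₂ := ((ha₁ t₂).mp ((ha₂ t₁).mpr e₂.symm).symm).symm
      exact hb₁ (by rw [this]; simp [hXdef])
    have hb₃ : z₃ ∈ X := by
      by_contra h
      rw [if_neg hb₁, if_neg hb₂, if_neg h] at hcut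
      split_ifs at hcut <;> omega
    have hb₄ : z₄ ∈ X := by
      by_contra h
      rw [if_neg hb₁, if_neg hb₂, if_neg h] at hcut
      split_ifs at hcut <;> omega
    have e₃ : z₃ = f₂ := hn₃ hb₃
    have hadj : G.Adj f₁ f₂ := (ha₃ f₂).mpr e₃.symm
    refine Or.inl ⟨⟨hadj, fun z hz => ?_, fun z hz => ?_⟩, fun hB => ?_⟩
    · rw [(ha₁ z).mp hz]; exact hb₁
    · rw [(ha₂ z).mp hz]; exact hb₂
    · have h' : t₂ = z₁ := (ha₁ t₂).mp hB.1
      exact hb₁ (h' ▸ (show t₂ ∈ X by simp [hXdef]))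
end

section
/- Let G be a simple graph on a finite vertex set V and let a, b, c ∈ V be pairwise distinct vertices, each of degree 1 in G, with Y = {a, b, c}. Suppose |∂(Y)| = 1. Then exactly one vertex of Y has its unique neighbor outside Y, and the other two vertices of Y are adjacent to each other. -/
/-!
A vertex of degree one lies on a single edge, so the edges inside `Y = {a, b, c}` form a
matching and there is at most one of them. If there were none, the three edges at `a`, `b`,
`c` would be distinct edges of `∂(Y)`. Hence there is exactly one inner edge, say `bc`, and
the edge at `a` leaves `Y`.
-/

open Finset

variable {V : Type*}

namespace SimpleGraph

variable [Fintype V] {G : SimpleGraph V} [DecidableRel G.Adj]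

lemma card_le_edgeCutSize_of_isIndepSet [DecidableEq V] {S : Finset V}
    (hS : G.IsIndepSet (S : Set V)) (hnbr : ∀ x ∈ S, ∃ y, G.Adj x y) :
    #S ≤ edgeCutSize G S := by
  choose! f hf using hnbr
  refine card_le_card_of_injOn (fun x => (x, f x)) (fun x hx => ?_)
    (fun x _ y _ h => congrArg Prod.fst h)
  have hfx : f x ∉ S := fun hmem => hS hx hmem (hf x hx).ne (hf x hx)
  simp only [coe_filter, Set.mem_ofPred_eq, mem_product, mem_compl]
  exact ⟨⟨hx, hfx⟩, hf x hx⟩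

lemma not_adj_of_degree_eq_one_of_adj {x y z : V} (hdx : G.degree x = 1) (hxy : G.Adj x y)
    (hzy : z ≠ y) : ¬ G.Adj x z := fun hxz =>
  hzy ((degree_eq_one_iff_existsUnique_adj.mp hdx).unique hxz hxy)

lemma forall_adj_notMem_of_adj_of_degree_eq_one [DecidableEq V] {a b c : V} (hab : a ≠ b)
    (hac : a ≠ c) (hdb : G.degree b = 1) (hdc : G.degree c = 1) (hbc : G.Adj b c) :
    ∀ z, G.Adj a z → z ∉ ({a, b, c} : Finset V) := by
  intro z haz
  simp only [mem_insert, mem_singleton]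
  rintro (rfl | rfl | rfl)
  · exact G.irrefl haz
  · exact not_adj_of_degree_eq_one_of_adj hdb hbc hac haz.symm
  · exact not_adj_of_degree_eq_one_of_adj hdc hbc.symm hab haz.symm

lemma adj_or_adj_or_adj_of_edgeCutSize_lt_three [DecidableEq V] {a b c : V} (hab : a ≠ b)
    (hac : a ≠ c) (hbc : b ≠ c) (hda : 0 < G.degree a) (hdb : 0 < G.degree b)
    (hdc : 0 < G.degree c) (hcut : edgeCutSize G {a, b, c} < 3) :
    G.Adj a b ∨ G.Adj a c ∨ G.Adj b c := by
  by_contra! hind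
  have hS : G.IsIndepSet (({a, b, c} : Finset V) : Set V) := by
    simp [isIndepSet_iff, Set.pairwise_insert, hind, G.adj_comm]
  have hnbr : ∀ x ∈ ({a, b, c} : Finset V), ∃ y, G.Adj x y := by
    simp only [mem_insert, mem_singleton]
    rintro x (rfl | rfl | rfl) <;> exact (G.degree_pos_iff_exists_adj _).mp ‹_›
  have h3 := card_le_edgeCutSize_of_isIndepSet hS hnbr
  rw [card_eq_three.mpr ⟨a, b, c, hab, hac, hbc, rfl⟩] at h3
  omega

end SimpleGraph

open SimpleGraph

/-- The clause gadget of the NP-hardness reduction.  Let `a, b, c` be pairwise distinct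
vertices of degree `1` with `Y = {a, b, c}` and `|∂(Y)| = 1`.  Then exactly one vertex of
`Y` has its unique neighbor outside `Y`, and the other two vertices of `Y` are adjacent to
each other. -/
theorem clause_gadget [Fintype V] [DecidableEq V]
    (G : SimpleGraph V) [DecidableRel G.Adj] (a b c : V)
    (hab : a ≠ b) (hac : a ≠ c) (hbc : b ≠ c)
    (hda : G.degree a = 1) (hdb : G.degree b = 1) (hdc : G.degree c = 1)
    (hcut : edgeCutSize G {a, b, c} = 1) :
    ((∀ z, G.Adj a z → z ∉ ({a, b, c} : Finset V)) ∧ G.Adj b c ∧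
        ¬ ((∀ z, G.Adj b z → z ∉ ({a, b, c} : Finset V)) ∧ G.Adj a c) ∧
        ¬ ((∀ z, G.Adj c z → z ∉ ({a, b, c} : Finset V)) ∧ G.Adj a b)) ∨
      ((∀ z, G.Adj b z → z ∉ ({a, b, c} : Finset V)) ∧ G.Adj a c ∧
        ¬ ((∀ z, G.Adj a z → z ∉ ({a, b, c} : Finset V)) ∧ G.Adj b c) ∧
        ¬ ((∀ z, G.Adj c z → z ∉ ({a, b, c} : Finset V)) ∧ G.Adj a b)) ∨
      ((∀ z, G.Adj c z → z ∉ ({a, b, c} : Finset V)) ∧ G.Adj a b ∧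
        ¬ ((∀ z, G.Adj a z → z ∉ ({a, b, c} : Finset V)) ∧ G.Adj b c) ∧
        ¬ ((∀ z, G.Adj b z → z ∉ ({a, b, c} : Finset V)) ∧ G.Adj a c)) := by
  obtain h | h | h := adj_or_adj_or_adj_of_edgeCutSize_lt_three (G := G) hab hac hbc
    (by omega) (by omega) (by omega) (by omega)
  · refine Or.inr (Or.inr ⟨?_, h, fun h' => ?_, fun h' => ?_⟩)
    · rw [show ({a, b, c} : Finset V) = {c, a, b} by rw [pair_comm, insert_comm]]
      exact forall_adj_notMem_of_adj_of_degree_eq_one hac.symm hbc.symm hda hdb h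
    · exact not_adj_of_degree_eq_one_of_adj hdb h.symm hac.symm h'.2
    · exact not_adj_of_degree_eq_one_of_adj hda h hbc.symm h'.2
  · refine Or.inr (Or.inl ⟨?_, h, fun h' => ?_, fun h' => ?_⟩)
    · rw [insert_comm]
      exact forall_adj_notMem_of_adj_of_degree_eq_one hab.symm hbc hda hdc h
    · exact not_adj_of_degree_eq_one_of_adj hdc h.symm hab.symm h'.2.symm
    · exact not_adj_of_degree_eq_one_of_adj hda h hbc h'.2
  · refine Or.inl ⟨forall_adj_notMem_of_adj_of_degree_eq_one hab hac hdb hdc h, h,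
      fun h' => ?_, fun h' => ?_⟩
    · exact not_adj_of_degree_eq_one_of_adj hdc h.symm hab h'.2.symm
    · exact not_adj_of_degree_eq_one_of_adj hdb h hac h'.2.symm
end

section
/- Let T be a forest, i.e., an acyclic simple graph on a finite vertex set V, and let H₁ and H₂ be spanning subgraphs of T (subgraphs with vertex set V whose edge sets are subsets of the edge set of T). If deg_{H₁}(v) = deg_{H₂}(v) for every v ∈ V, then H₁ = H₂. In other words, a forest has at most one f-factor for any degree function f : V → ℕ. -/
/-!
The symmetric difference `H₁ ∆ H₂` is again a subgraph of the forest `T`, hence acyclic. At every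
vertex its degree is `|N₁ \ N₂| + |N₂ \ N₁|`, and the two summands agree because `|N₁| = |N₂|`, so
every degree is even. But a finite forest with an edge has a leaf (an end of a longest path), so
`H₁ ∆ H₂` has no edges, i.e. `H₁ = H₂`.
-/

open scoped symmDiff

namespace Finset

theorem even_card_symmDiff_of_card_eq {α : Type*} [DecidableEq α] {s t : Finset α}
    (h : #s = #t) : Even #(s ∆ t) := by
  rw [symmDiff_def, sup_eq_union, card_union_of_disjoint disjoint_sdiff_sdiff, card_sdiff_comm h]
  exact ⟨_, rfl⟩

end Finset

namespace SimpleGraph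

variable {V : Type*} [Fintype V] {G : SimpleGraph V} [DecidableRel G.Adj]

theorem IsAcyclic.exists_degree_eq_one (hG : G.IsAcyclic) (hne : G ≠ ⊥) :
    ∃ v, G.degree v = 1 := by
  obtain ⟨a, b, hab⟩ := ne_bot_iff_exists_adj.mp hne
  have : Nonempty V := ⟨a⟩
  obtain ⟨u, v, p, hp, hmax⟩ := Walk.exists_isPath_forall_isPath_length_le_length G
  have hnil : ¬p.Nil := fun hnil => by
    simpa [hnil.length_eq_zero] using hmax a b hab.toWalk (by simp [hab.ne])
  refine ⟨u, degree_eq_one_iff_existsUnique_adj.mpr ⟨_, p.adj_snd hnil, fun w hw => ?_⟩⟩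
  refine hG.eq_snd_of_adj_start hp hw (by_contra fun hwp => ?_)
  simpa using hmax w v (p.cons hw.symm) (hp.cons hwp)

theorem IsAcyclic.eq_bot_of_forall_degree_ne_one (hG : G.IsAcyclic)
    (hdeg : ∀ v, G.degree v ≠ 1) : G = ⊥ := by
  by_contra hne
  obtain ⟨v, hv⟩ := hG.exists_degree_eq_one hne
  exact hdeg v hv

theorem neighborFinset_symmDiff [DecidableEq V] (H₁ H₂ : SimpleGraph V) [DecidableRel H₁.Adj]
    [DecidableRel H₂.Adj] [DecidableRel (H₁ ∆ H₂).Adj] (v : V) :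
    (H₁ ∆ H₂).neighborFinset v = H₁.neighborFinset v ∆ H₂.neighborFinset v := by
  ext w
  simp only [mem_neighborFinset, Finset.mem_symmDiff]
  rfl

theorem even_degree_symmDiff [DecidableEq V] {H₁ H₂ : SimpleGraph V} [DecidableRel H₁.Adj]
    [DecidableRel H₂.Adj] [DecidableRel (H₁ ∆ H₂).Adj] {v : V} (h : H₁.degree v = H₂.degree v) :
    Even ((H₁ ∆ H₂).degree v) := by
  rw [← card_neighborFinset_eq_degree, neighborFinset_symmDiff]
  exact Finset.even_card_symmDiff_of_card_eq h

end SimpleGraph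

theorem forest_f_factor_unique_general {V : Type*} [Fintype V]
    (T H₁ H₂ : SimpleGraph V) [DecidableRel H₁.Adj] [DecidableRel H₂.Adj]
    (hT : T.IsAcyclic) (h₁ : H₁ ≤ T) (h₂ : H₂ ≤ T)
    (hdeg : ∀ v, H₁.degree v = H₂.degree v) : H₁ = H₂ := by
  classical
  have hacyclic : (H₁ ∆ H₂).IsAcyclic := hT.anti (symmDiff_le_sup.trans (sup_le h₁ h₂))
  refine symmDiff_eq_bot.mp (hacyclic.eq_bot_of_forall_degree_ne_one fun v hv => ?_)
  simpa [hv] using SimpleGraph.even_degree_symmDiff (hdeg v)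

/-- A forest has at most one `f`-factor: if `T` is an acyclic simple graph on a finite
vertex set and `H₁, H₂` are spanning subgraphs of `T` (i.e. `H₁ ≤ T` and `H₂ ≤ T` as
simple graphs on the same vertex set) with the same degree at every vertex, then
`H₁ = H₂`. -/
theorem forest_f_factor_unique {V : Type*} [Fintype V] [DecidableEq V]
    (T H₁ H₂ : SimpleGraph V) [DecidableRel H₁.Adj] [DecidableRel H₂.Adj]
    (hT : T.IsAcyclic) (h₁ : H₁ ≤ T) (h₂ : H₂ ≤ T)
    (hdeg : ∀ v, H₁.degree v = H₂.degree v) : H₁ = H₂ :=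
  forest_f_factor_unique_general T H₁ H₂ hT h₁ h₂ hdeg
end

section
/- Let G be a simple graph on a finite vertex set in which every vertex has degree exactly 1, let l ≥ 1, and let a₁, b₁, ..., a_l, b_l be 2l pairwise distinct vertices with V_j = {a₁, b₁, ..., a_l, b_l}. Suppose that every edge of G with both endpoints in V_j has the form a_u b_u for some u; that for each u, every neighbor of a_u outside V_j equals a designated vertex x_u ∉ V_j and every neighbor of b_u outside V_j equals a designated vertex z_u ∉ V_j; and that |∂(V_j)| = 2. Then there exists a unique index u such that a_u x_u and b_u z_u are edges of G, and for every u' ≠ u, a_{u'} b_{u'} is an edge of G. -/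
open Finset

variable {V : Type*}

/-! Since every vertex has exactly one neighbour, the number of edges leaving the group
equals the number of its vertices matched outside it. A vertex `a u` is matched either to
`b u` or to `x u`, and `a u` is matched to `x u` exactly when `b u` is matched to `z u`,
since otherwise `b u` would be matched to `a u`. So the outside-matched vertices come in
pairs `a u, b u`, and a cut of size `2` leaves exactly one such pair, every other `a u'`
being matched to `b u'`. -/

lemma SimpleGraph.eq_of_adj_of_adj_of_degree_le_one [Fintype V] {G : SimpleGraph V}
    [DecidableRel G.Adj] {v p q : V} (hv : G.degree v ≤ 1) (hp : G.Adj v p) (hq : G.Adj v q) :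
    p = q :=
  card_le_one.1 hv p ((G.mem_neighborFinset v p).2 hp) q ((G.mem_neighborFinset v q).2 hq)

lemma edgeCutSize_eq_card_filter_exists_adj [Fintype V] [DecidableEq V] {G : SimpleGraph V}
    [DecidableRel G.Adj] (hG : ∀ v, G.degree v ≤ 1) (S : Finset V) :
    edgeCutSize G S = #{v ∈ S | ∃ w ∉ S, G.Adj v w} := by
  rw [edgeCutSize, ← card_image_of_injOn (f := Prod.fst)]
  · congr 1
    ext v
    simp [and_assoc]
  · rintro ⟨v, p⟩ hp ⟨v', q⟩ hq (rfl : v = v')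
    simp only [coe_filter, mem_product, mem_compl, Set.mem_ofPred_eq] at hp hq
    rw [G.eq_of_adj_of_adj_of_degree_le_one (hG v) hp.2 hq.2]

def groupVertices {l : ℕ} [DecidableEq V] (a b : Fin l → V) : Finset V :=
  univ.image a ∪ univ.image b

lemma left_mem_groupVertices {l : ℕ} [DecidableEq V] (a b : Fin l → V) (u : Fin l) :
    a u ∈ groupVertices a b :=
  mem_union_left _ (mem_image_of_mem a (mem_univ u))

lemma right_mem_groupVertices {l : ℕ} [DecidableEq V] (a b : Fin l → V) (u : Fin l) :
    b u ∈ groupVertices a b :=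
  mem_union_right _ (mem_image_of_mem b (mem_univ u))

lemma groupVertices_comm {l : ℕ} [DecidableEq V] (a b : Fin l → V) :
    groupVertices b a = groupVertices a b :=
  union_comm _ _

structure IsGroupGadget {l : ℕ} [DecidableEq V] (G : SimpleGraph V) (a b x z : Fin l → V) :
    Prop where
  injective_a : Function.Injective a
  injective_b : Function.Injective b
  a_ne_b : ∀ i j, a i ≠ b j
  x_notMem : ∀ i, x i ∉ groupVertices a b
  z_notMem : ∀ i, z i ∉ groupVertices a b
  adj_inside : ∀ p q : V, p ∈ groupVertices a b → q ∈ groupVertices a b → G.Adj p q →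
    ∃ u, s(p, q) = s(a u, b u)
  eq_x_of_adj_a : ∀ u p, G.Adj (a u) p → p ∉ groupVertices a b → p = x u
  eq_z_of_adj_b : ∀ u p, G.Adj (b u) p → p ∉ groupVertices a b → p = z u

namespace IsGroupGadget

variable {l : ℕ} [DecidableEq V] {G : SimpleGraph V} {a b x z : Fin l → V}

lemma swap (h : IsGroupGadget G a b x z) : IsGroupGadget G b a z x where
  injective_a := h.injective_b
  injective_b := h.injective_a
  a_ne_b i j := (h.a_ne_b j i).symm
  x_notMem := groupVertices_comm a b ▸ h.z_notMem
  z_notMem := groupVertices_comm a b ▸ h.x_notMem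
  adj_inside p q hp hq hpq := by
    rw [groupVertices_comm] at hp hq
    obtain ⟨u, hu⟩ := h.adj_inside p q hp hq hpq
    exact ⟨u, hu.trans Sym2.eq_swap⟩
  eq_x_of_adj_a u p hp := groupVertices_comm a b ▸ h.eq_z_of_adj_b u p hp
  eq_z_of_adj_b u p hp := groupVertices_comm a b ▸ h.eq_x_of_adj_a u p hp

lemma eq_b_or_eq_x_of_adj (h : IsGroupGadget G a b x z) {u : Fin l} {q : V}
    (hq : G.Adj (a u) q) : q = b u ∨ q = x u := by
  by_cases hqS : q ∈ groupVertices a b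
  · obtain ⟨u', hu'⟩ := h.adj_inside _ _ (left_mem_groupVertices a b u) hqS hq
    rcases Sym2.eq_iff.1 hu' with ⟨hau, rfl⟩ | ⟨hau, -⟩
    · exact .inl (congrArg b (h.injective_a hau)).symm
    · exact absurd hau (h.a_ne_b u u')
  · exact .inr (h.eq_x_of_adj_a u q hq hqS)

lemma adj_z_of_adj_x [Fintype V] [DecidableRel G.Adj] (hG : G.IsRegularOfDegree 1)
    (h : IsGroupGadget G a b x z) {u : Fin l} (hax : G.Adj (a u) (x u)) :
    G.Adj (b u) (z u) := by
  obtain ⟨q, hq, -⟩ := SimpleGraph.degree_eq_one_iff_existsUnique_adj.1 (hG (b u))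
  rcases h.swap.eq_b_or_eq_x_of_adj hq with rfl | rfl
  · -- `a u` is matched to `x u`, so it cannot also be matched to `b u`
    have hbx : b u = x u := G.eq_of_adj_of_adj_of_degree_le_one (hG (a u)).le hq.symm hax
    exact absurd (hbx ▸ right_mem_groupVertices a b u) (h.x_notMem u)
  · exact hq

lemma adj_x_iff_adj_z [Fintype V] [DecidableRel G.Adj] (hG : G.IsRegularOfDegree 1)
    (h : IsGroupGadget G a b x z) {u : Fin l} : G.Adj (a u) (x u) ↔ G.Adj (b u) (z u) :=
  ⟨h.adj_z_of_adj_x hG, h.swap.adj_z_of_adj_x hG⟩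

lemma adj_b_or_adj_x [Fintype V] [DecidableRel G.Adj] (hG : G.IsRegularOfDegree 1)
    (h : IsGroupGadget G a b x z) (u : Fin l) : G.Adj (a u) (b u) ∨ G.Adj (a u) (x u) := by
  obtain ⟨q, hq, -⟩ := SimpleGraph.degree_eq_one_iff_existsUnique_adj.1 (hG (a u))
  rcases h.eq_b_or_eq_x_of_adj hq with rfl | rfl
  exacts [.inl hq, .inr hq]

lemma filter_exists_adj_notMem_eq [Fintype V] [DecidableRel G.Adj]
    (hG : G.IsRegularOfDegree 1) (h : IsGroupGadget G a b x z) :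
    {v ∈ groupVertices a b | ∃ w ∉ groupVertices a b, G.Adj v w} =
      image a {u | G.Adj (a u) (x u)} ∪ image b {u | G.Adj (a u) (x u)} := by
  ext v
  simp only [mem_filter, mem_union, mem_image, mem_univ, true_and]
  constructor
  · rintro ⟨hv, w, hw, hvw⟩
    rcases mem_union.1 hv with hv | hv <;> obtain ⟨u, -, rfl⟩ := mem_image.1 hv
    · exact .inl ⟨u, h.eq_x_of_adj_a u w hvw hw ▸ hvw, rfl⟩
    · exact .inr ⟨u, (h.adj_x_iff_adj_z hG).2 (h.eq_z_of_adj_b u w hvw hw ▸ hvw), rfl⟩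
  · rintro (⟨u, hu, rfl⟩ | ⟨u, hu, rfl⟩)
    · exact ⟨left_mem_groupVertices a b u, x u, h.x_notMem u, hu⟩
    · exact ⟨right_mem_groupVertices a b u, z u, h.z_notMem u, (h.adj_x_iff_adj_z hG).1 hu⟩

lemma edgeCutSize_eq_two_mul [Fintype V] [DecidableRel G.Adj] (hG : G.IsRegularOfDegree 1)
    (h : IsGroupGadget G a b x z) :
    edgeCutSize G (groupVertices a b) = 2 * #{u | G.Adj (a u) (x u)} := by
  have hdisj :
      Disjoint (image a {u | G.Adj (a u) (x u)}) (image b {u | G.Adj (a u) (x u)}) := by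
    simp only [disjoint_left, mem_image]
    rintro _ ⟨i, -, rfl⟩ ⟨j, -, hj⟩
    exact h.a_ne_b i j hj.symm
  rw [edgeCutSize_eq_card_filter_exists_adj (fun v ↦ (hG v).le),
    h.filter_exists_adj_notMem_eq hG, card_union_of_disjoint hdisj,
    card_image_of_injective _ h.injective_a,
    card_image_of_injective _ h.injective_b, two_mul]

end IsGroupGadget

theorem group_gadget_general [Fintype V] [DecidableEq V]
    (G : SimpleGraph V) [DecidableRel G.Adj] (hdeg : ∀ v, G.degree v = 1)
    (l : ℕ) (a b x z : Fin l → V)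
    (ha : Function.Injective a) (hb : Function.Injective b)
    (hab : ∀ i j, a i ≠ b j)
    (hx : ∀ i, x i ∉ Finset.univ.image a ∪ Finset.univ.image b)
    (hz : ∀ i, z i ∉ Finset.univ.image a ∪ Finset.univ.image b)
    (hintern : ∀ p q : V, p ∈ Finset.univ.image a ∪ Finset.univ.image b →
      q ∈ Finset.univ.image a ∪ Finset.univ.image b → G.Adj p q →
      ∃ u, s(p, q) = s(a u, b u))
    (hna : ∀ u, ∀ p, G.Adj (a u) p → p ∉ Finset.univ.image a ∪ Finset.univ.image b →
      p = x u)
    (hnb : ∀ u, ∀ p, G.Adj (b u) p → p ∉ Finset.univ.image a ∪ Finset.univ.image b →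
      p = z u)
    (hcut : edgeCutSize G (Finset.univ.image a ∪ Finset.univ.image b) = 2) :
    ∃ u : Fin l,
      (G.Adj (a u) (x u) ∧ G.Adj (b u) (z u) ∧ ∀ u' ≠ u, G.Adj (a u') (b u')) ∧
        ∀ u' : Fin l, G.Adj (a u') (x u') ∧ G.Adj (b u') (z u') → u' = u := by
  have hG : IsGroupGadget G a b x z := ⟨ha, hb, hab, hx, hz, hintern, hna, hnb⟩
  have hcard : #{u | G.Adj (a u) (x u)} = 1 := by
    have := hG.edgeCutSize_eq_two_mul hdeg
    rw [groupVertices, hcut] at this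
    omega
  obtain ⟨u, hu⟩ := card_eq_one.1 hcard
  have hsel : ∀ u', G.Adj (a u') (x u') ↔ u' = u := by
    simpa [Finset.ext_iff] using hu
  have hux : G.Adj (a u) (x u) := (hsel u).2 rfl
  refine ⟨u, ⟨hux, (hG.adj_x_iff_adj_z hdeg).1 hux, fun u' hne ↦ ?_⟩,
    fun u' hu' ↦ (hsel u').1 hu'.1⟩
  exact (hG.adj_b_or_adj_x hdeg u').resolve_right (mt (hsel u').1 hne)

/-- The group gadget of the reduction from 3-Dimensional Matching.  Let `G` be a simple
graph on a finite vertex set in which every vertex has degree `1`, let `l ≥ 1`, and let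
`a 0, b 0, …, a (l-1), b (l-1)` be `2l` pairwise distinct vertices forming the set
`V_j = (Finset.univ.image a) ∪ (Finset.univ.image b)`.  Suppose every edge of `G` inside
`V_j` has the form `(a u)(b u)`; for every `u`, every neighbor of `a u` outside `V_j`
equals the designated vertex `x u ∉ V_j` and every neighbor of `b u` outside `V_j` equals
the designated vertex `z u ∉ V_j`; and `|∂(V_j)| = 2`.  Then there is a unique index `u`
such that `(a u)(x u)` and `(b u)(z u)` are edges of `G`, and for every `u' ≠ u`,
`(a u')(b u')` is an edge of `G`. -/
theorem group_gadget [Fintype V] [DecidableEq V]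
    (G : SimpleGraph V) [DecidableRel G.Adj] (hdeg : ∀ v, G.degree v = 1)
    (l : ℕ) (hl : 1 ≤ l) (a b x z : Fin l → V)
    (ha : Function.Injective a) (hb : Function.Injective b)
    (hab : ∀ i j, a i ≠ b j)
    (hx : ∀ i, x i ∉ Finset.univ.image a ∪ Finset.univ.image b)
    (hz : ∀ i, z i ∉ Finset.univ.image a ∪ Finset.univ.image b)
    (hintern : ∀ p q : V, p ∈ Finset.univ.image a ∪ Finset.univ.image b →
      q ∈ Finset.univ.image a ∪ Finset.univ.image b → G.Adj p q →
      ∃ u, s(p, q) = s(a u, b u))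
    (hna : ∀ u, ∀ p, G.Adj (a u) p → p ∉ Finset.univ.image a ∪ Finset.univ.image b →
      p = x u)
    (hnb : ∀ u, ∀ p, G.Adj (b u) p → p ∉ Finset.univ.image a ∪ Finset.univ.image b →
      p = z u)
    (hcut : edgeCutSize G (Finset.univ.image a ∪ Finset.univ.image b) = 2) :
    ∃ u : Fin l,
      (G.Adj (a u) (x u) ∧ G.Adj (b u) (z u) ∧ ∀ u' ≠ u, G.Adj (a u') (b u')) ∧
        ∀ u' : Fin l, G.Adj (a u') (x u') ∧ G.Adj (b u') (z u') → u' = u :=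
  group_gadget_general G hdeg l a b x z ha hb hab hx hz hintern hna hnb hcut
end
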